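/- arXiv:2407.15104 — 9 statements merged into one kernel-verified Lean document; each statement's English description precedes it below -/
import Mathlib

section
/- The lifted code C(q|q^ℓ) of an [n,k,d] linear code C over GF(q) is a linear code over GF(q^ℓ) of the same length n, the same dimension k, and the same minimum Hamming distance d. -/
open Finset

/-- Hamming weight of a vector. -/
noncomputable def wt {ι R : Type*} [Fintype ι] [Zero R] (c : ι → R) : ℕ :=
  Set.ncard {j | c j ≠ 0}

/-- The lifted code `C(q|q^ℓ)`: the `E`-span of (the image in `E^n` of) a code `C ⊆ F^n`. -/
noncomputable def liftCode (F : Type*) {ι : Type*} (E : Type*) [Field F] [Field E] [Algebra F E]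
    (C : Submodule F (ι → F)) : Submodule E (ι → E) :=
  Submodule.span E ((fun c : ι → F => fun j => algebraMap F E (c j)) '' (C : Set (ι → F)))

/-- `A_i(C)`: the number of codewords of Hamming weight `i`. -/
noncomputable def numWt {ι R : Type*} [Fintype ι] [Semiring R] (C : Submodule R (ι → R)) (i : ℕ) : ℕ :=
  Set.ncard {c : ι → R | c ∈ C ∧ wt c = i}

/-- The set of supports of weight-`i` codewords of `C` (without repetition). -/
def codeSupports {ι R : Type*} [Fintype ι] [Semiring R] (C : Submodule R (ι → R)) (i : ℕ) :
    Set (Set ι) :=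
  {s | ∃ c, c ∈ C ∧ wt c = i ∧ s = {j | c j ≠ 0}}

/-- `C` has minimum Hamming distance `d`. -/
def IsMinDist {ι R : Type*} [Fintype ι] [Semiring R] (C : Submodule R (ι → R)) (d : ℕ) : Prop :=
  (∃ c, c ∈ C ∧ c ≠ 0 ∧ wt c = d) ∧ ∀ c, c ∈ C → c ≠ 0 → d ≤ wt c

/-- The dual code under the standard bilinear form. -/
def dualCode {ι R : Type*} [Fintype ι] [CommRing R] (C : Submodule R (ι → R)) :
    Submodule R (ι → R) where
  carrier := {x | ∀ c ∈ C, ∑ j, x j * c j = 0}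
  add_mem' := by
    intro a b ha hb c hc
    simp only [Set.mem_setOf_eq] at *
    simp [Pi.add_apply, add_mul, Finset.sum_add_distrib, ha c hc, hb c hc]
  zero_mem' := by intro c hc; simp
  smul_mem' := by
    intro a x hx c hc
    simp only [Set.mem_setOf_eq] at *
    simp [Pi.smul_apply, smul_eq_mul, mul_assoc, ← Finset.mul_sum, hx c hc]

/-- Evaluation of multivariate polynomials over `GF(2)` as a linear map. -/
noncomputable def evalLM (m : ℕ) :
    MvPolynomial (Fin m) (ZMod 2) →ₗ[ZMod 2] ((Fin m → ZMod 2) → ZMod 2) where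
  toFun := fun p x => MvPolynomial.eval x p
  map_add' := by intro p q; funext x; simp
  map_smul' := by intro a p; funext x; simp

/-- The binary Reed-Muller code `RM₂(r,m)`: evaluations of polynomials of total degree `≤ r`. -/
noncomputable def RM (r m : ℕ) : Submodule (ZMod 2) ((Fin m → ZMod 2) → ZMod 2) :=
  Submodule.map (evalLM m) (MvPolynomial.restrictTotalDegree (Fin m) (ZMod 2) r)

/-!
Every `F`-linear functional `φ : E → F`, applied coordinatewise, maps the lifted code back into
`C`, because `φ (e • c) = φ e • c` for `c ∈ F^n`. Hence a nonzero lifted codeword `x`, with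
`x j ≠ 0` and `φ (x j) ≠ 0`, yields a nonzero codeword of `C` supported inside the support of `x`;
and an `E`-linear relation `∑ gᵢ • vᵢ = 0` among the lifts of a basis `v` of `C` yields the
`F`-linear relations `∑ φ gᵢ • vᵢ = 0`, so every `gᵢ` is killed by all functionals and vanishes.
-/

section Weight

variable {ι R S : Type*} [Fintype ι] [Zero R] [Zero S]

lemma wt_comp_le (f : R → S) (hf : f 0 = 0) (x : ι → R) : wt (f ∘ x) ≤ wt x :=
  Set.ncard_le_ncard (fun j hj hxj => hj (by simp [hxj, hf])) (Set.toFinite _)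

lemma wt_comp_of_injective {f : R → S} (hf : Function.Injective f) (hf0 : f 0 = 0)
    (x : ι → R) : wt (f ∘ x) = wt x := by
  unfold wt
  congr 1
  ext j
  simp [← hf0, hf.ne_iff]

end Weight

section Lift

variable (F E : Type*) [Field F] [Field E] [Algebra F E] (ι : Type*)

def liftVec : (ι → F) →ₗ[F] (ι → E) :=
  LinearMap.compLeft (Algebra.linearMap F E) ι

variable {F E ι}

@[simp]
lemma liftVec_apply (c : ι → F) (j : ι) : liftVec F E ι c j = algebraMap F E (c j) :=
  rfl

lemma liftVec_injective : Function.Injective (liftVec F E ι) := fun _ _ h =>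
  funext fun j => (algebraMap F E).injective (congrFun h j)

lemma liftCode_eq_span_image (C : Submodule F (ι → F)) :
    liftCode F E C = Submodule.span E (liftVec F E ι '' C) :=
  rfl

lemma liftCode_span (s : Set (ι → F)) :
    liftCode F E (Submodule.span F s) = Submodule.span E (liftVec F E ι '' s) := by
  rw [liftCode_eq_span_image]
  refine le_antisymm (Submodule.span_le.mpr ?_)
    (Submodule.span_mono (Set.image_mono Submodule.subset_span))
  calc liftVec F E ι '' Submodule.span F s
      = Submodule.map (liftVec F E ι) (Submodule.span F s) := rfl
    _ = Submodule.span F (liftVec F E ι '' s) := by rw [Submodule.map_span]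
    _ ⊆ Submodule.span E (liftVec F E ι '' s) := Submodule.span_le_restrictScalars F E _

lemma compLeft_smul_liftVec (φ : Module.Dual F E) (e : E) (c : ι → F) :
    LinearMap.compLeft φ ι (e • liftVec F E ι c) = φ e • c := by
  ext j
  simp only [LinearMap.compLeft_apply, Function.comp_apply, Pi.smul_apply, liftVec_apply,
    smul_eq_mul]
  rw [mul_comm, ← Algebra.smul_def, map_smul, smul_eq_mul, mul_comm]

lemma compLeft_mem_of_mem_liftCode {C : Submodule F (ι → F)} {x : ι → E}
    (hx : x ∈ liftCode F E C) (φ : Module.Dual F E) : LinearMap.compLeft φ ι x ∈ C := by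
  rw [liftCode_eq_span_image] at hx
  induction hx using Submodule.span_induction generalizing φ with
  | mem _ h =>
    obtain ⟨c, hc, rfl⟩ := h
    rw [← one_smul E (liftVec F E ι c), compLeft_smul_liftVec]
    exact C.smul_mem (φ 1) hc
  | zero => simp
  | add _ _ _ _ hx hy => simpa only [map_add] using C.add_mem (hx φ) (hy φ)
  | smul e _ _ hx => exact hx (φ ∘ₗ LinearMap.mulLeft F e)

lemma LinearIndependent.map_liftVec {κ : Type*} {v : κ → ι → F} (hv : LinearIndependent F v) :
    LinearIndependent E (liftVec F E ι ∘ v) := by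
  rw [linearIndependent_iff'] at hv ⊢
  intro s g hg i hi
  have hφg : ∀ φ : Module.Dual F E, φ (g i) = 0 := fun φ => by
    refine hv s (fun i => φ (g i)) ?_ i hi
    simpa [compLeft_smul_liftVec] using congrArg (LinearMap.compLeft φ ι) hg
  exact (Module.forall_dual_apply_eq_zero_iff F (g i)).mp hφg

lemma finrank_liftCode [Finite ι] (C : Submodule F (ι → F)) :
    Module.finrank E (liftCode F E C) = Module.finrank F C := by
  let v := Module.finBasis F C
  have hv : LinearIndependent F (C.subtype ∘ v) :=
    v.linearIndependent.map' C.subtype C.ker_subtype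
  have hC : Submodule.span F (Set.range (C.subtype ∘ v)) = C := by
    rw [Set.range_comp, Submodule.span_image, v.span_eq, Submodule.map_subtype_top]
  have hlift :
      liftCode F E C = Submodule.span E (Set.range (liftVec F E ι ∘ C.subtype ∘ v)) := by
    rw [Set.range_comp, ← liftCode_span, hC]
  rw [hlift, finrank_span_eq_card hv.map_liftVec, Fintype.card_fin]

lemma wt_liftVec [Fintype ι] (c : ι → F) : wt (liftVec F E ι c) = wt c :=
  wt_comp_of_injective (algebraMap F E).injective (map_zero _) c

lemma le_wt_of_mem_liftCode [Fintype ι] {C : Submodule F (ι → F)} {d : ℕ}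
    (hd : ∀ c ∈ C, c ≠ 0 → d ≤ wt c) {x : ι → E} (hx : x ∈ liftCode F E C) (hx0 : x ≠ 0) :
    d ≤ wt x := by
  obtain ⟨j, hj⟩ := Function.ne_iff.mp hx0
  obtain ⟨φ, hφ⟩ := Module.Projective.exists_dual_ne_zero F hj
  calc d ≤ wt (LinearMap.compLeft φ ι x) :=
        hd _ (compLeft_mem_of_mem_liftCode hx φ) fun h => hφ (congrFun h j)
    _ ≤ wt x := wt_comp_le φ φ.map_zero x

lemma isMinDist_liftCode [Fintype ι] {C : Submodule F (ι → F)} {d : ℕ} (hd : IsMinDist C d) :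
    IsMinDist (liftCode F E C) d := by
  obtain ⟨⟨c, hc, hc0, hcd⟩, hmin⟩ := hd
  refine ⟨⟨liftVec F E ι c, Submodule.subset_span ⟨c, hc, rfl⟩, ?_, ?_⟩,
    fun x hx hx0 => le_wt_of_mem_liftCode hmin hx hx0⟩
  · exact (map_ne_zero_iff _ liftVec_injective).mpr hc0
  · rw [wt_liftVec, hcd]

end Lift

theorem stmt1_general {F E : Type*} [Field F] [Field E] [Algebra F E] {n k d : ℕ}
    (C : Submodule F (Fin n → F)) (hk : Module.finrank F C = k)
    (hd : IsMinDist C d) :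
    Module.finrank E (liftCode F E C) = k ∧ IsMinDist (liftCode F E C) d :=
  ⟨(finrank_liftCode C).trans hk, isMinDist_liftCode hd⟩

/-- the lifted code of an `[n,k,d]` code over `F` is an `[n,k,d]` code over `E`. -/
theorem stmt1 {F E : Type*} [Field F] [Field E] [Algebra F E] {n k d : ℕ}
    (C : Submodule F (Fin n → F)) (hk : Module.finrank F C = k) (hk1 : 1 ≤ k)
    (hd : IsMinDist C d) :
    Module.finrank E (liftCode F E C) = k ∧ IsMinDist (liftCode F E C) d :=
  stmt1_general C hk hd
end

section
/- The number of minimum-weight codewords in the lifted code satisfies A_d(C(q|q^ℓ)) = ((q^ℓ - 1)/(q - 1)) · A_d(C), and moreover every minimum weight codeword of C(q|q^ℓ) has the form u·c where c is a minimum weight codeword of C and u ∈ GF(q^ℓ)*. -/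
open Finset

/-!
Let `x` be a minimum weight word of the lift, scaled so that `x j₀ = 1`. For every `F`-linear
functional `φ : E → F`, the word `φ ∘ x` lies in `C`; if `φ 1 = 0` it is supported in
`supp x \ {j₀}`, which is too small for a nonzero codeword, so `φ (x j) = 0` for all `j`. Hence
every `x j` lies in `F`, and `x` is the lift of a minimum weight codeword of `C`. Conversely
`u • c` with `u ∈ Eˣ` is such a word, and it determines `(u, c)` up to `(u a, a⁻¹ c)` with
`a ∈ Fˣ`; thus `|Fˣ| · A_d(C(q|q^ℓ)) = |Eˣ| · A_d(C)`.
-/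

section LiftedCode

variable {F E : Type*} [Field F] [Field E] [Algebra F E] {ι : Type*}

lemma comp_mem_of_mem_liftCode {C : Submodule F (ι → F)} {x : ι → E}
    (hx : x ∈ liftCode F E C) (φ : E →ₗ[F] F) : (fun j => φ (x j)) ∈ C := by
  induction hx using Submodule.span_induction generalizing φ with
  | mem y hy =>
    obtain ⟨c, hc, rfl⟩ := hy
    convert C.smul_mem (φ 1) hc using 1
    funext j
    simp [Algebra.algebraMap_eq_smul_one, mul_comm]
  | zero => simpa [Pi.zero_def] using C.zero_mem
  | add y z _ _ hy hz => simpa [Pi.add_def] using C.add_mem (hy φ) (hz φ)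
  | smul a y _ hy => exact hy (φ ∘ₗ LinearMap.mulLeft F a)

lemma exists_algebraMap_eq_of_forall_dual {v : E}
    (hv : ∀ φ : Module.Dual F E, φ 1 = 0 → φ v = 0) : ∃ a : F, algebraMap F E a = v := by
  let p := Submodule.span F {(1 : E)}
  suffices v ∈ p by
    obtain ⟨a, rfl⟩ := Submodule.mem_span_singleton.mp this
    exact ⟨a, Algebra.algebraMap_eq_smul_one a⟩
  rw [← Submodule.Quotient.mk_eq_zero p, ← Module.forall_dual_apply_eq_zero_iff F]
  intro φ
  have h1 : (1 : E) ∈ p := Submodule.mem_span_singleton_self 1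
  exact hv (φ ∘ₗ p.mkQ) (by simp [(Submodule.Quotient.mk_eq_zero p).mpr h1])

lemma mul_algebraMap_mem_liftCode {C : Submodule F (ι → F)} (u : E) {c : ι → F}
    (hc : c ∈ C) :
    (fun j => u * algebraMap F E (c j)) ∈ liftCode F E C :=
  Submodule.smul_mem _ u (Submodule.subset_span ⟨c, hc, rfl⟩)

lemma exists_units_of_mul_algebraMap_eq {u u' : E} (hu : u ≠ 0) {c c' : ι → F} (hc : c ≠ 0)
    (h : (fun j => u * algebraMap F E (c j)) = fun j => u' * algebraMap F E (c' j)) :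
    ∃ a : Fˣ, u' = u * algebraMap F E a ∧ c = a • c' := by
  obtain ⟨j₀, hj₀⟩ : ∃ j, c j ≠ 0 := Function.ne_iff.mp hc
  have h₀ := congrFun h j₀
  have hc'j₀ : c' j₀ ≠ 0 := fun hc' => hj₀ (by simpa [hc', hu] using h₀)
  have hcross (j : ι) : c j * c' j₀ = c j₀ * c' j := by
    apply (algebraMap F E).injective
    apply mul_left_cancel₀ hu
    simp only [map_mul]
    linear_combination algebraMap F E (c' j₀) * congrFun h j - algebraMap F E (c' j) * h₀
  refine ⟨Units.mk0 (c j₀ / c' j₀) (div_ne_zero hj₀ hc'j₀), ?_, funext fun j => ?_⟩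
  · rw [Units.val_mk0, map_div₀, ← mul_div_assoc, eq_div_iff (by simpa using hc'j₀)]
    exact h₀.symm
  · rw [Pi.smul_apply, Units.smul_mk0, smul_eq_mul, div_mul_eq_mul_div, eq_div_iff hc'j₀]
    exact hcross j

variable [Fintype ι]

lemma wt_eq_zero_iff {R : Type*} [Zero R] {c : ι → R} : wt c = 0 ↔ c = 0 := by
  simp [wt, Set.ncard_eq_zero (Set.toFinite _), Set.eq_empty_iff_forall_notMem, funext_iff]

lemma wt_lt_wt_of_support_subset {R S : Type*} [Zero R] [Zero S] {c : ι → R} {x : ι → S}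
    (hsupp : ∀ j, c j ≠ 0 → x j ≠ 0) {j₀ : ι} (hc : c j₀ = 0) (hx : x j₀ ≠ 0) :
    wt c < wt x :=
  Set.ncard_lt_ncard ⟨hsupp, fun h => h hx hc⟩

lemma wt_smul {R : Type*} [MulZeroClass R] [NoZeroDivisors R] {a : R} (ha : a ≠ 0)
    (c : ι → R) : wt (a • c) = wt c := by
  simp [wt, ha]

lemma wt_mul_algebraMap {u : E} (hu : u ≠ 0) (c : ι → F) :
    wt (fun j => u * algebraMap F E (c j)) = wt c := by
  simp [wt, hu]

variable {C : Submodule F (ι → F)} {d : ℕ}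

namespace IsMinDist

lemma pos (hd : IsMinDist C d) : 0 < d := by
  obtain ⟨c, -, hc, rfl⟩ := hd.1
  exact Nat.pos_of_ne_zero (wt_eq_zero_iff.not.mpr hc)

lemma exists_eq_algebraMap_of_mem_liftCode (hd : IsMinDist C d) {y : ι → E}
    (hy : y ∈ liftCode F E C) (hw : wt y = d) {j₀ : ι} (hj₀ : y j₀ = 1) :
    ∃ c ∈ C, y = fun j => algebraMap F E (c j) := by
  have hkill (φ : Module.Dual F E) (hφ : φ 1 = 0) : (fun j => φ (y j)) = 0 := by
    by_contra hne
    refine (hd.2 _ (comp_mem_of_mem_liftCode hy φ) hne).not_gt ?_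
    rw [← hw]
    exact wt_lt_wt_of_support_subset (fun j hj hyj => hj (by simp [hyj]))
      (j₀ := j₀) (by simp [hj₀, hφ]) (by simp [hj₀])
  obtain ⟨g, hg⟩ := LinearMap.exists_leftInverse_of_injective (Algebra.linearMap F E)
    (LinearMap.ker_eq_bot.mpr (algebraMap F E).injective)
  refine ⟨fun j => g (y j), comp_mem_of_mem_liftCode hy g, funext fun j => ?_⟩
  obtain ⟨a, ha⟩ := exists_algebraMap_eq_of_forall_dual fun φ hφ => congrFun (hkill φ hφ) j
  show y j = algebraMap F E (g (y j))
  rw [← ha]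
  exact congrArg _ (LinearMap.congr_fun hg a).symm

lemma exists_eq_mul_algebraMap_of_mem_liftCode (hd : IsMinDist C d) {x : ι → E}
    (hx : x ∈ liftCode F E C) (hw : wt x = d) :
    ∃ u : Eˣ, ∃ c, c ∈ C ∧ wt c = d ∧ x = fun j => (u : E) * algebraMap F E (c j) := by
  obtain ⟨j₀, hj₀⟩ := Function.ne_iff.mp
    (wt_eq_zero_iff.not.mp (hw.trans_ne hd.pos.ne') : x ≠ 0)
  obtain ⟨c, hc, hxc⟩ := hd.exists_eq_algebraMap_of_mem_liftCode (y := (x j₀)⁻¹ • x)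
    (Submodule.smul_mem _ _ hx) ((wt_smul (inv_ne_zero hj₀) x).trans hw)
    (inv_mul_cancel₀ hj₀)
  have hx_eq : x = fun j => x j₀ * algebraMap F E (c j) := by
    funext j
    rw [← congrFun hxc j, Pi.smul_apply, smul_eq_mul, mul_inv_cancel_left₀ hj₀]
  refine ⟨Units.mk0 _ hj₀, c, hc, ?_, hx_eq⟩
  rw [← hw, hx_eq, wt_mul_algebraMap hj₀]

lemma card_units_mul_numWt_liftCode (hd : IsMinDist C d) :
    Nat.card Fˣ * numWt (liftCode F E C) d = Nat.card Eˣ * numWt C d := by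
  let S := {x | x ∈ liftCode F E C ∧ wt x = d}
  let W := {c | c ∈ C ∧ wt c = d}
  have : ∀ x : S, ∃ p : Eˣ × W, x.1 = fun j => (p.1 : E) * algebraMap F E (p.2.1 j) := by
    intro x
    obtain ⟨u, c, hc, hwc, hx⟩ := hd.exists_eq_mul_algebraMap_of_mem_liftCode x.2.1 x.2.2
    exact ⟨(u, ⟨c, hc, hwc⟩), hx⟩
  choose rep hrep using this
  let g : Fˣ × S → Eˣ × W := fun p =>
    ((rep p.2).1 * Units.map (algebraMap F E : F →* E) p.1,
      ⟨p.1⁻¹ • (rep p.2).2.1, C.smul_mem _ (rep p.2).2.2.1,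
        (wt_smul (Units.ne_zero _) _).trans (rep p.2).2.2.2⟩)
  have hg_val (p : Fˣ × S) :
      (fun j => ((g p).1 : E) * algebraMap F E ((g p).2.1 j)) = p.2.1 := by
    rw [hrep p.2]
    funext j
    simp [g, Units.smul_def, mul_assoc, ← map_mul]
  have hg : Function.Bijective g := by
    refine ⟨fun p p' hpp' => ?_, fun ⟨u, c⟩ => ?_⟩
    · have hx : p.2 = p'.2 := Subtype.ext (by rw [← hg_val, hpp', hg_val])
      have ha := congrArg Prod.fst hpp'
      simp only [g, hx, mul_right_inj] at ha
      exact Prod.ext (Units.map_injective (algebraMap F E).injective ha) hx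
    · let x : S := ⟨_, mul_algebraMap_mem_liftCode (u : E) c.2.1,
        (wt_mul_algebraMap (Units.ne_zero u) _).trans c.2.2⟩
      have hc₀ : (rep x).2.1 ≠ 0 := wt_eq_zero_iff.not.mp ((rep x).2.2.2.trans_ne hd.pos.ne')
      obtain ⟨a, hu, hc⟩ :=
        exists_units_of_mul_algebraMap_eq (rep x).1.ne_zero hc₀ (hrep x).symm
      refine ⟨(a, x), Prod.ext (Units.ext hu.symm) (Subtype.ext ?_)⟩
      simp [g, hc]
  simpa [numWt, Nat.card_prod] using Nat.card_eq_of_bijective g hg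

end IsMinDist

end LiftedCode

theorem stmt2_general {F E : Type*} [Field F] [Field E] [Algebra F E] [Fintype F] [Fintype E]
    {n d : ℕ} (C : Submodule F (Fin n → F)) (hd : IsMinDist C d) :
    numWt (liftCode F E C) d = (Fintype.card E - 1) / (Fintype.card F - 1) * numWt C d ∧
    ∀ x ∈ liftCode F E C, wt x = d →
      ∃ u : Eˣ, ∃ c, c ∈ C ∧ wt c = d ∧ x = fun j => (u : E) * algebraMap F E (c j) := by
  refine ⟨?_, fun x hx hw => hd.exists_eq_mul_algebraMap_of_mem_liftCode hx hw⟩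
  obtain ⟨m, hm⟩ := Subgroup.card_dvd_of_injective (Units.map (algebraMap F E : F →* E))
    (Units.map_injective (algebraMap F E).injective)
  have hcount := hd.card_units_mul_numWt_liftCode (E := E)
  simp only [Nat.card_units, Nat.card_eq_fintype_card] at hm hcount
  have hq : 0 < Fintype.card F - 1 := Nat.sub_pos_of_lt Fintype.one_lt_card
  rw [hm, Nat.mul_div_cancel_left m hq]
  rw [hm, mul_assoc] at hcount
  exact Nat.eq_of_mul_eq_mul_left hq hcount

/-- `A_d(C(q|q^ℓ)) = ((q^ℓ-1)/(q-1))·A_d(C)`, and every minimum weight codeword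
of the lifted code is `u • c` for a minimum weight codeword `c ∈ C` and `u ∈ E*`. -/
theorem stmt2 {F E : Type*} [Field F] [Field E] [Algebra F E] [Fintype F] [Fintype E]
    {n d : ℕ} (C : Submodule F (Fin n → F)) (hC : C ≠ ⊥) (hd : IsMinDist C d) :
    numWt (liftCode F E C) d = (Fintype.card E - 1) / (Fintype.card F - 1) * numWt C d ∧
    ∀ x ∈ liftCode F E C, wt x = d →
      ∃ u : Eˣ, ∃ c, c ∈ C ∧ wt c = d ∧ x = fun j => (u : E) * algebraMap F E (c j) :=
  stmt2_general C hd
end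

section
/- If C is a linear code of length n over GF(q) whose monomial automorphism group contains a t-homogeneous subgroup (of permutation parts), then for every weight i ≥ t with A_i(C(q|q^ℓ)) ≠ 0, the supports of the weight-i codewords of the lifted code C(q|q^ℓ) form a t-design on n points. -/
open Finset

/-
A monomial automorphism `c ↦ (d j * c (π j))_j` of `C` extends `E`-linearly to a
monomial automorphism of the lifted code, and it maps the support of `c` to `π⁻¹(supp c)` without
changing the weight. Hence `s ↦ π⁻¹ s` permutes the weight-`i` supports and carries the blocks
containing `π(S)` bijectively onto those containing `S`. By `t`-homogeneity every `t`-set is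
covered by as many blocks as a fixed `t`-subset `T₀` of one weight-`i` support, a positive number.
-/

section Design

variable {ι : Type*}

theorem ncard_sep_image_subset_eq {𝓑 : Set (Set ι)} (π : Equiv.Perm ι)
    (h𝓑 : ∀ s, π ⁻¹' s ∈ 𝓑 ↔ s ∈ 𝓑) (S : Set ι) :
    {s ∈ 𝓑 | π '' S ⊆ s}.ncard = {s ∈ 𝓑 | S ⊆ s}.ncard := by
  refine Set.ncard_congr (fun s _ => π ⁻¹' s) ?_ ?_ ?_
  · rintro s ⟨hs, hSs⟩
    exact ⟨(h𝓑 s).mpr hs, Set.image_subset_iff.mp hSs⟩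
  · intro s₁ s₂ _ _ h
    exact Set.preimage_injective.mpr π.surjective h
  · rintro s ⟨hs, hSs⟩
    refine ⟨π '' s, ⟨?_, Set.image_mono hSs⟩, Set.preimage_image_eq s π.injective⟩
    rwa [← h𝓑, Set.preimage_image_eq s π.injective]

theorem exists_pos_ncard_sep_subset_eq_of_homogeneous [Finite ι] [DecidableEq ι] {t : ℕ}
    {𝓑 : Set (Set ι)}
    (hhom : ∀ S T : Finset ι, S.card = t → T.card = t →
      ∃ π : Equiv.Perm ι, (∀ s, π ⁻¹' s ∈ 𝓑 ↔ s ∈ 𝓑) ∧ S.image π = T)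
    {B : Set ι} (hB : B ∈ 𝓑) (htB : t ≤ B.ncard) :
    ∃ lam : ℕ, 0 < lam ∧ ∀ T : Finset ι, T.card = t → {s ∈ 𝓑 | ↑T ⊆ s}.ncard = lam := by
  have hBfin := B.toFinite
  rw [Set.ncard_eq_toFinset_card B hBfin] at htB
  obtain ⟨T₀, hT₀B, hT₀⟩ := Finset.exists_subset_card_eq htB
  refine ⟨{s ∈ 𝓑 | ↑T₀ ⊆ s}.ncard, ?_, fun T hT => ?_⟩
  · rw [Set.ncard_pos]
    exact ⟨B, hB, fun j hj => hBfin.mem_toFinset.mp (hT₀B hj)⟩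
  · obtain ⟨π, h𝓑, rfl⟩ := hhom T₀ T hT₀ hT
    rw [Finset.coe_image, ncard_sep_image_subset_eq π h𝓑]

end Design

section Monomial

variable {ι R : Type*} [CommSemiring R]

noncomputable def monomialEquiv (d : ι → Rˣ) (π : Equiv.Perm ι) : (ι → R) ≃ₗ[R] (ι → R) where
  toFun c j := d j * c (π j)
  invFun c j := ↑(d (π.symm j))⁻¹ * c (π.symm j)
  left_inv c := by funext j; simp [← mul_assoc]
  right_inv c := by funext j; simp [← mul_assoc]
  map_add' a b := by funext j; simp [mul_add]
  map_smul' r a := by funext j; simp [mul_left_comm]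

@[simp]
theorem monomialEquiv_apply (d : ι → Rˣ) (π : Equiv.Perm ι) (c : ι → R) (j : ι) :
    monomialEquiv d π c j = d j * c (π j) :=
  rfl

theorem support_monomialEquiv (d : ι → Rˣ) (π : Equiv.Perm ι) (c : ι → R) :
    {j | monomialEquiv d π c j ≠ 0} = π ⁻¹' {j | c j ≠ 0} := by
  ext j
  simp [Units.mul_right_eq_zero]

theorem wt_monomialEquiv [Fintype ι] (d : ι → Rˣ) (π : Equiv.Perm ι) (c : ι → R) :
    wt (monomialEquiv d π c) = wt c := by
  rw [wt, wt, support_monomialEquiv, ← Equiv.image_symm_eq_preimage,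
    Set.ncard_image_of_injective _ π.symm.injective]

theorem preimage_mem_codeSupports_iff [Fintype ι] {D : Submodule R (ι → R)} {d : ι → Rˣ}
    {π : Equiv.Perm ι} (hD : D.map (monomialEquiv d π).toLinearMap = D) (i : ℕ) (s : Set ι) :
    π ⁻¹' s ∈ codeSupports D i ↔ s ∈ codeSupports D i := by
  set σ := monomialEquiv d π
  have hσ : ∀ c, σ c ∈ D ↔ c ∈ D := fun c => by
    nth_rewrite 1 [← hD]
    rw [Submodule.mem_map_equiv, σ.symm_apply_apply]
  constructor
  · rintro ⟨c, hc, hwt, hs⟩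
    refine ⟨σ.symm c, (hσ _).mp (by rwa [σ.apply_symm_apply]), ?_, ?_⟩
    · rw [← wt_monomialEquiv d π, ← hwt]
      exact congrArg wt (σ.apply_symm_apply c)
    · apply Set.preimage_injective.mpr π.surjective
      rw [hs, ← support_monomialEquiv d π]
      exact congrArg (fun c => {j | c j ≠ 0}) (σ.apply_symm_apply c).symm
  · rintro ⟨c, hc, hwt, rfl⟩
    exact ⟨σ c, (hσ c).mpr hc, (wt_monomialEquiv d π c).trans hwt,
      (support_monomialEquiv d π c).symm⟩

end Monomial

section Lift

variable {F E ι : Type*} [Field F] [Field E] [Algebra F E]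

theorem map_monomialEquiv_liftCode (C : Submodule F (ι → F)) (d : ι → Fˣ) (π : Equiv.Perm ι) :
    (liftCode F E C).map
      (monomialEquiv (fun j => Units.map (algebraMap F E) (d j)) π).toLinearMap
      = liftCode F E (C.map (monomialEquiv d π).toLinearMap) := by
  rw [liftCode, liftCode, Submodule.map_span, Submodule.map_coe, ← Set.image_comp,
    ← Set.image_comp]
  congr 2
  funext c j
  simp

end Lift

/-- if the monomial automorphism group of `C` acts `t`-homogeneously (through
the permutation parts) on the coordinates, then for each `i ≥ t` with
`A_i(C(q|q^ℓ)) ≠ 0` the supports of the weight-`i` codewords of the lifted code form a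
`t`-design. -/
theorem stmt7 {F E : Type*} [Field F] [Field E] [Algebra F E] {n t : ℕ}
    (C : Submodule F (Fin n → F))
    (hhom : ∀ S T : Finset (Fin n), S.card = t → T.card = t →
      ∃ (d : Fin n → Fˣ) (π : Equiv.Perm (Fin n)),
        ((fun c : Fin n → F => fun j => (d j : F) * c (π j)) '' (C : Set (Fin n → F)) = C) ∧
        S.image π = T)
    (i : ℕ) (hi : t ≤ i) (hA : numWt (liftCode F E C) i ≠ 0) :
    ∃ lam : ℕ, 0 < lam ∧ ∀ T : Finset (Fin n), T.card = t →
      Set.ncard {s ∈ codeSupports (liftCode F E C) i | ↑T ⊆ s} = lam := by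
  obtain ⟨c₀, hc₀, hwt₀⟩ := Set.nonempty_of_ncard_ne_zero hA
  refine exists_pos_ncard_sep_subset_eq_of_homogeneous (fun S T hS hT => ?_)
    ⟨c₀, hc₀, hwt₀, rfl⟩ (hwt₀ ▸ hi : t ≤ wt c₀)
  obtain ⟨d, π, hC, hST⟩ := hhom S T hS hT
  have hCσ : C.map (monomialEquiv d π).toLinearMap = C :=
    SetLike.coe_injective ((Submodule.map_coe _ _).trans hC)
  have hlift := (map_monomialEquiv_liftCode (E := E) C d π).trans (congrArg (liftCode F E) hCσ)
  exact ⟨π, preimage_mem_codeSupports_iff hlift i, hST⟩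
end

section
/- The lifted Simplex code S_{(q,m)}(q|q^ℓ) with 1 ≤ ℓ ≤ m has parameters [(q^m−1)/(q−1), m, q^{m−1}] over GF(q^ℓ), and its dual has parameters [(q^m−1)/(q−1), (q^m−1)/(q−1)−m, 3] over GF(q^ℓ). -/
open Finset

/-!
Write `q = |F|`. A codeword of the lifted code is `j ↦ φ (g j)` for an `F`-linear map
`φ : F^m → E`, and it vanishes exactly at the columns lying in `ker φ`. Since every nonzero vector
is a multiple of exactly one column, a subspace of dimension `k` contains `(q^k - 1)/(q - 1)`
columns, so the weight is `(q^m - q^(dim ker φ))/(q - 1) ≥ q^(m-1)`, with equality for coordinate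
functionals. A dual codeword is an `E`-linear relation among the columns. One of weight at most 2
would make a column zero or two columns proportional over `E`, hence over `F`, which is impossible;
one of weight 3 exists because a plane contains `q + 1 ≥ 3` columns and any three of them are
dependent. The dual has dimension `n - m` because the dot product is nondegenerate.
-/

open Module

theorem pow_succ_eq_mul_sub_one_add_pow {q : ℕ} (hq : 1 ≤ q) (k : ℕ) :
    q ^ (k + 1) = q ^ k * (q - 1) + q ^ k := by
  rw [← Nat.mul_add_one, Nat.sub_add_cancel hq, pow_succ]

/-- The columns of the Simplex code: one nonzero representative of each point of `ℙ(V)`. -/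
def IsProjectiveEnumeration (F : Type*) {ι V : Type*} [Field F] [AddCommGroup V] [Module F V]
    (g : ι → V) : Prop :=
  (∀ j, g j ≠ 0) ∧ ∀ v : V, v ≠ 0 → ∃! j, ∃ a : F, v = a • g j

namespace IsProjectiveEnumeration

variable {F V ι : Type*} [Field F] [AddCommGroup V] [Module F V] {g : ι → V}

theorem eq_of_smul_eq (hg : IsProjectiveEnumeration F g) {a b : F} {j k : ι} (ha : a ≠ 0)
    (h : a • g j = b • g k) : j = k :=
  (hg.2 _ (smul_ne_zero ha (hg.1 j))).unique ⟨a, rfl⟩ ⟨b, h⟩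

theorem linearMap_eq_zero {M : Type*} [AddCommGroup M] [Module F M]
    (hg : IsProjectiveEnumeration F g) {φ : V →ₗ[F] M} (hφ : ∀ j, φ (g j) = 0) : φ = 0 := by
  ext v
  by_cases hv : v = 0
  · simp [hv]
  · obtain ⟨j, ⟨a, rfl⟩, -⟩ := hg.2 v hv
    simp [hφ]

variable [Fintype F] [FiniteDimensional F V]

theorem ncard_mul_add_one (hg : IsProjectiveEnumeration F g) (T : Submodule F V) :
    {j | g j ∈ T}.ncard * (Fintype.card F - 1) + 1 = Fintype.card F ^ finrank F T := by
  have : Finite V := Module.finite_of_finite F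
  let f : Fˣ × {j | g j ∈ T} → ((T : Set V) \ {0} : Set V) := fun p =>
    ⟨(p.1 : F) • g p.2, T.smul_mem _ p.2.2, smul_ne_zero p.1.ne_zero (hg.1 _)⟩
  have hf : Function.Bijective f := by
    constructor
    · rintro ⟨a, j, hj⟩ ⟨b, k, hk⟩ h
      have hvs : (a : F) • g j = (b : F) • g k := congrArg Subtype.val h
      obtain rfl := hg.eq_of_smul_eq a.ne_zero hvs
      obtain rfl := Units.ext (smul_left_injective F (hg.1 j) hvs)
      rfl
    · rintro ⟨v, hvT, hv0⟩
      obtain ⟨j, ⟨a, rfl⟩, -⟩ := hg.2 v hv0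
      have ha : a ≠ 0 := left_ne_zero_of_smul hv0
      refine ⟨⟨Units.mk0 a ha, j, ?_⟩, rfl⟩
      simpa [ha] using T.smul_mem a⁻¹ hvT
  have hcard := Nat.card_eq_of_bijective f hf
  rw [Nat.card_prod, Nat.card_units, Nat.card_coe_set_eq, Nat.card_coe_set_eq,
    Set.ncard_sdiff_singleton_of_mem T.zero_mem, ← Nat.card_coe_set_eq (T : Set V),
    SetLike.coe_sort_coe, Module.natCard_eq_pow_finrank (K := F) (V := T),
    Nat.card_eq_fintype_card] at hcard
  have : 0 < Fintype.card F ^ finrank F T := by positivity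
  rw [mul_comm] at hcard
  omega

variable [Fintype ι]

theorem card_mul_add_one (hg : IsProjectiveEnumeration F g) :
    Fintype.card ι * (Fintype.card F - 1) + 1 = Fintype.card F ^ finrank F V := by
  simpa [Set.ncard_univ] using hg.ncard_mul_add_one ⊤

theorem wt_mul_add_pow_finrank_ker {M : Type*} [AddCommGroup M] [Module F M]
    (hg : IsProjectiveEnumeration F g) (φ : V →ₗ[F] M) :
    wt (fun j => φ (g j)) * (Fintype.card F - 1) + Fintype.card F ^ finrank F (LinearMap.ker φ)
      = Fintype.card F ^ finrank F V := by
  have hker := hg.ncard_mul_add_one (LinearMap.ker φ)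
  have hall := hg.card_mul_add_one
  have hsplit : {j | g j ∈ LinearMap.ker φ}.ncard + wt (fun j => φ (g j)) = Fintype.card ι := by
    rw [← Nat.card_eq_fintype_card, ← Set.ncard_add_ncard_compl {j | g j ∈ LinearMap.ker φ}]
    rfl
  rw [← hsplit, add_mul] at hall
  omega

theorem pow_finrank_sub_one_le_wt {M : Type*} [AddCommGroup M] [Module F M]
    (hg : IsProjectiveEnumeration F g) {φ : V →ₗ[F] M} (hφ : φ ≠ 0) :
    Fintype.card F ^ (finrank F V - 1) ≤ wt (fun j => φ (g j)) := by
  have hlt : finrank F (LinearMap.ker φ) < finrank F V :=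
    Submodule.finrank_lt (by rwa [Ne, LinearMap.ker_eq_top])
  have hq : 1 < Fintype.card F := Fintype.one_lt_card
  have hpow : Fintype.card F ^ finrank F (LinearMap.ker φ) ≤ Fintype.card F ^ (finrank F V - 1) :=
    Nat.pow_le_pow_right (by omega) (by omega)
  have hwt := hg.wt_mul_add_pow_finrank_ker φ
  rw [← Nat.sub_add_cancel (show 1 ≤ finrank F V by omega), pow_succ_eq_mul_sub_one_add_pow hq.le]
    at hwt
  exact Nat.le_of_mul_le_mul_right (c := Fintype.card F - 1) (by omega) (by omega)

theorem wt_eq_pow_finrank_sub_one {M : Type*} [AddCommGroup M] [Module F M]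
    (hg : IsProjectiveEnumeration F g) {φ : V →ₗ[F] M}
    (hφ : finrank F (LinearMap.ker φ) + 1 = finrank F V) :
    wt (fun j => φ (g j)) = Fintype.card F ^ (finrank F V - 1) := by
  have hq : 1 < Fintype.card F := Fintype.one_lt_card
  have hwt := hg.wt_mul_add_pow_finrank_ker φ
  rw [← hφ, pow_succ_eq_mul_sub_one_add_pow hq.le] at hwt
  rw [← hφ, Nat.add_sub_cancel]
  exact Nat.eq_of_mul_eq_mul_right (m := Fintype.card F - 1) (by omega) (by omega)

theorem exists_wt_le_three_sum_smul_eq_zero (hg : IsProjectiveEnumeration F g)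
    (hV : 2 ≤ finrank F V) : ∃ y : ι → F, y ≠ 0 ∧ ∑ j, y j • g j = 0 ∧ wt y ≤ 3 := by
  classical
  let b := Module.finBasis F V
  set W := Submodule.span F (Set.range (b ∘ Fin.castLE hV))
  have hW : finrank F W = 2 := by
    simpa using finrank_span_eq_card (b.linearIndependent.comp _ (Fin.castLE_injective hV))
  have hT : 3 ≤ {j | g j ∈ W}.ncard := by
    have hcount := hg.ncard_mul_add_one W
    have hq : 2 ≤ Fintype.card F := Fintype.one_lt_card
    rw [hW] at hcount
    obtain ⟨p, hp⟩ : ∃ p, Fintype.card F = p + 1 := ⟨_, (Nat.sub_add_cancel (by omega)).symm⟩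
    rw [hp, Nat.add_sub_cancel] at hcount
    nlinarith
  obtain ⟨s, hsW, hs⟩ := Set.exists_subset_card_eq hT
  have hdep : ¬ LinearIndepOn F g s := fun h => by
    have hle := (LinearIndependent.of_comp W.subtype
      (v := fun j : s => (⟨g j, hsW j.2⟩ : W)) h).fintype_card_le_finrank
    rw [← Nat.card_eq_fintype_card, Nat.card_coe_set_eq, hs, hW] at hle
    omega
  obtain ⟨l, hls, hl, hl0⟩ := linearDepOn_iff'.mp hdep
  refine ⟨l, fun h => hl0 (Finsupp.ext (congrFun h)), ?_, ?_⟩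
  · rw [← hl, Finsupp.linearCombination_apply, Finsupp.sum_fintype _ _ (by simp)]
  · rw [← hs, wt]
    exact Set.ncard_le_ncard (fun j hj => (Finsupp.mem_supported F l).mp hls (by simpa using hj))

end IsProjectiveEnumeration

section DualCode

open Matrix

theorem mem_dualCode_iff {ι R : Type*} [Fintype ι] [CommRing R] (C : Submodule R (ι → R))
    (x : ι → R) : x ∈ dualCode C ↔ ∀ c ∈ C, x ⬝ᵥ c = 0 :=
  Iff.rfl

theorem mem_dualCode_range_mulVecLin {ι κ R : Type*} [Fintype ι] [Fintype κ] [DecidableEq κ]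
    [CommRing R] (A : Matrix ι κ R) (y : ι → R) :
    y ∈ dualCode (LinearMap.range A.mulVecLin) ↔ y ᵥ* A = 0 := by
  rw [mem_dualCode_iff]
  constructor
  · intro hy
    funext k
    have := hy _ ⟨Pi.single k 1, rfl⟩
    rwa [Matrix.mulVecLin_apply, dotProduct_mulVec, dotProduct_single_one] at this
  · rintro hy _ ⟨x, rfl⟩
    rw [Matrix.mulVecLin_apply, dotProduct_mulVec, hy, zero_dotProduct]

theorem finrank_add_finrank_dualCode {ι K : Type*} [Fintype ι] [DecidableEq ι] [Field K]
    (C : Submodule K (ι → K)) :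
    finrank K C + finrank K (dualCode C) = Fintype.card ι := by
  have hdual : dualCode C = C.dualAnnihilator.comap (dotProductEquiv K ι : _ →ₗ[K] _) := by
    ext x
    rw [Submodule.mem_comap, Submodule.mem_dualAnnihilator, mem_dualCode_iff]
    rfl
  rw [hdual, Submodule.comap_equiv_eq_map_symm, LinearEquiv.finrank_map_eq,
    Subspace.finrank_add_finrank_dualAnnihilator_eq, Module.finrank_fintype_fun_eq_card]

end DualCode

section LiftedSimplexCode

open Matrix

variable {F E : Type*} [Field F] [Field E] [Algebra F E]

-- `(of g).map (algebraMap F E)` is the transposed generator matrix over `E`: the lifted code is the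
-- range of its `mulVecLin`, and its dual consists of the `y` with `y ᵥ* _ = 0`.

theorem exists_eq_smul_of_algebraMap_eq_mul {κ : Type*} {u w : κ → F} (hu : u ≠ 0) {e : E}
    (h : ∀ i, algebraMap F E (w i) = e * algebraMap F E (u i)) : ∃ a : F, w = a • u := by
  obtain ⟨i₀, hi₀⟩ := Function.ne_iff.mp hu
  have he : algebraMap F E (w i₀ / u i₀) = e := by
    rw [map_div₀, h i₀, mul_div_cancel_right₀ _ ((map_ne_zero _).mpr hi₀)]
  exact ⟨w i₀ / u i₀, funext fun i => (algebraMap F E).injective (by simp [h i, he])⟩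

variable {ι κ : Type*} {g : ι → κ → F}

theorem mulVec_map_algebraMap [Fintype κ] (x : κ → E) :
    (of g).map (algebraMap F E) *ᵥ x = fun j => Fintype.linearCombination F x (g j) := by
  funext j
  simp [mulVec, dotProduct, Fintype.linearCombination_apply, Algebra.smul_def]

theorem injective_mulVecLin_map_algebraMap [Fintype κ] (hg : IsProjectiveEnumeration F g) :
    Function.Injective ((of g).map (algebraMap F E)).mulVecLin := by
  classical
  refine (injective_iff_map_eq_zero _).mpr fun x hx => funext fun k => ?_
  rw [mulVecLin_apply, mulVec_map_algebraMap] at hx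
  have hφ := hg.linearMap_eq_zero (φ := Fintype.linearCombination F x) (congrFun hx)
  simpa using LinearMap.congr_fun hφ (Pi.single k 1)

theorem pow_card_sub_one_le_wt_mulVec [Fintype ι] [Fintype κ] [Fintype F]
    (hg : IsProjectiveEnumeration F g) {x : κ → E}
    (hx : (of g).map (algebraMap F E) *ᵥ x ≠ 0) :
    Fintype.card F ^ (Fintype.card κ - 1) ≤ wt ((of g).map (algebraMap F E) *ᵥ x) := by
  rw [mulVec_map_algebraMap] at hx ⊢
  simpa using hg.pow_finrank_sub_one_le_wt (φ := Fintype.linearCombination F x)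
    fun h => hx (funext fun j => by simp [h])

theorem wt_mulVec_single [Fintype ι] [Fintype κ] [DecidableEq κ] [Fintype F]
    (hg : IsProjectiveEnumeration F g) (k : κ) :
    wt ((of g).map (algebraMap F E) *ᵥ Pi.single k 1)
      = Fintype.card F ^ (Fintype.card κ - 1) := by
  rw [mulVec_map_algebraMap]
  have hker : LinearMap.ker (Fintype.linearCombination F (Pi.single k (1 : E)))
      = LinearMap.ker (LinearMap.proj k : (κ → F) →ₗ[F] F) := by
    ext v
    simp [Fintype.linearCombination_apply, Pi.single_apply]
  have hproj : (LinearMap.proj k : (κ → F) →ₗ[F] F) ≠ 0 := fun h => by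
    simpa using LinearMap.congr_fun h (Pi.single k 1)
  simpa using
    hg.wt_eq_pow_finrank_sub_one (hker ▸ Module.Dual.finrank_ker_add_one_of_ne_zero hproj)

theorem three_le_wt_of_vecMul_eq_zero [Fintype ι] (hg : IsProjectiveEnumeration F g)
    {y : ι → E} (hy : y ᵥ* (of g).map (algebraMap F E) = 0) (hy0 : y ≠ 0) : 3 ≤ wt y := by
  have hzero : ∀ {s : Set ι}, {j | y j ≠ 0} = s → ∀ j ∉ s, y j = 0 :=
    fun hs j hj => not_not.mp fun h => hj (hs ▸ h)
  have hwt0 : wt y ≠ 0 := by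
    rw [wt, Ne, Set.ncard_eq_zero]
    exact fun h => hy0 (funext fun j => hzero h j id)
  rw [vecMul_eq_sum] at hy
  by_contra! hlt
  obtain h1 | h2 : wt y = 1 ∨ wt y = 2 := by omega
  · obtain ⟨j, hs⟩ := Set.ncard_eq_one.mp h1
    have hyj : y j ≠ 0 := (hs ▸ Set.mem_singleton j : j ∈ {j | y j ≠ 0})
    rw [Fintype.sum_eq_single j fun k hk => by rw [hzero hs k hk, zero_smul]] at hy
    refine hg.1 j (funext fun i => ?_)
    simpa [hyj] using congrFun hy i
  · obtain ⟨j, k, hjk, hs⟩ := Set.ncard_eq_two.mp h2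
    have hyk : y k ≠ 0 := (hs ▸ Set.mem_insert_of_mem j rfl : k ∈ {j | y j ≠ 0})
    rw [Fintype.sum_eq_add j k hjk fun i hi => by
      rw [hzero hs i (by simp [hi.1, hi.2]), zero_smul]] at hy
    obtain ⟨a, ha⟩ := exists_eq_smul_of_algebraMap_eq_mul (hg.1 j) (e := -(y j / y k))
      (w := g k) fun i => by
        have := congrFun hy i
        simp only [Pi.add_apply, Pi.smul_apply, smul_eq_mul, Pi.zero_apply, map_apply, of_apply]
          at this
        field_simp
        linear_combination this
    exact hjk (hg.eq_of_smul_eq one_ne_zero (by rw [one_smul, ← ha])).symm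

theorem exists_vecMul_eq_zero_wt_le_three [Fintype ι] [Fintype κ] [Fintype F]
    (hg : IsProjectiveEnumeration F g)
    (hκ : 2 ≤ Fintype.card κ) :
    ∃ y : ι → E, y ≠ 0 ∧ y ᵥ* (of g).map (algebraMap F E) = 0 ∧ wt y ≤ 3 := by
  obtain ⟨y, hy0, hy, hwt⟩ := hg.exists_wt_le_three_sum_smul_eq_zero (by simpa using hκ)
  refine ⟨fun j => algebraMap F E (y j), fun h => hy0 (funext fun j => ?_), ?_, ?_⟩
  · simpa using congrFun h j
  · funext i
    simpa [vecMul, dotProduct, ← map_mul, ← map_sum, Finset.sum_apply] using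
      congrArg (algebraMap F E) (congrFun hy i)
  · simpa [wt] using hwt

end LiftedSimplexCode

theorem stmt8_general {F E : Type*} [Field F] [Field E] [Algebra F E] [Fintype F]
    {m n : ℕ} (hm : 2 ≤ m)
    (g : Fin n → (Fin m → F)) (hg0 : ∀ i, g i ≠ 0)
    (hg : ∀ v : Fin m → F, v ≠ 0 → ∃! i : Fin n, ∃ a : F, v = a • g i)
    (S : Submodule E (Fin n → E))
    (hS : S = Submodule.span E
      (Set.range fun i : Fin m => fun j : Fin n => algebraMap F E (g j i))) :
    n * (Fintype.card F - 1) = Fintype.card F ^ m - 1 ∧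
    Module.finrank E S = m ∧
    IsMinDist S (Fintype.card F ^ (m - 1)) ∧
    Module.finrank E (dualCode S) = n - m ∧
    IsMinDist (dualCode S) 3 := by
  have hgp : IsProjectiveEnumeration F g := ⟨hg0, hg⟩
  set A := (Matrix.of g).map (algebraMap F E)
  obtain rfl : S = LinearMap.range A.mulVecLin := by rw [hS, Matrix.range_mulVecLin]; rfl
  have hlen : n * (Fintype.card F - 1) + 1 = Fintype.card F ^ m := by
    simpa using hgp.card_mul_add_one
  have hrank : finrank E (LinearMap.range A.mulVecLin) = m := by
    rw [LinearMap.finrank_range_of_inj (injective_mulVecLin_map_algebraMap hgp),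
      Module.finrank_fintype_fun_eq_card, Fintype.card_fin]
  have hrow := wt_mulVec_single (E := E) hgp ⟨0, by omega⟩
  rw [Fintype.card_fin] at hrow
  refine ⟨by omega, hrank, ⟨⟨A.mulVec _, ⟨_, rfl⟩, fun h => ?_, hrow⟩, ?_⟩, ?_, ⟨?_, ?_⟩⟩
  · rw [h] at hrow
    exact (pow_pos Fintype.card_pos _).ne (by simpa [wt] using hrow)
  · rintro _ ⟨x, rfl⟩ hx
    simpa using pow_card_sub_one_le_wt_mulVec hgp hx
  · have := finrank_add_finrank_dualCode (LinearMap.range A.mulVecLin)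
    simp only [hrank, Fintype.card_fin] at this
    omega
  · obtain ⟨y, hy0, hy, hwt⟩ := exists_vecMul_eq_zero_wt_le_three (E := E) hgp (by simpa using hm)
    exact ⟨y, (mem_dualCode_range_mulVecLin A y).mpr hy, hy0,
      le_antisymm hwt (three_le_wt_of_vecMul_eq_zero hgp hy hy0)⟩
  · exact fun y hy hy0 =>
      three_le_wt_of_vecMul_eq_zero hgp ((mem_dualCode_range_mulVecLin A y).mp hy) hy0

/-- the lifted Simplex code has parameters `[(q^m-1)/(q-1), m, q^{m-1}]` over
`GF(q^ℓ)` and its dual has parameters `[(q^m-1)/(q-1), (q^m-1)/(q-1)-m, 3]`. -/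
theorem stmt8 {F E : Type*} [Field F] [Field E] [Algebra F E] [Fintype F] [Fintype E]
    {m n ℓ : ℕ} (hm : 2 ≤ m) (hl1 : 1 ≤ ℓ) (hlm : ℓ ≤ m)
    (hE : Fintype.card E = Fintype.card F ^ ℓ)
    (g : Fin n → (Fin m → F)) (hg0 : ∀ i, g i ≠ 0)
    (hg : ∀ v : Fin m → F, v ≠ 0 → ∃! i : Fin n, ∃ a : F, v = a • g i)
    (S : Submodule E (Fin n → E))
    (hS : S = Submodule.span E
      (Set.range fun i : Fin m => fun j : Fin n => algebraMap F E (g j i))) :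
    n * (Fintype.card F - 1) = Fintype.card F ^ m - 1 ∧
    Module.finrank E S = m ∧
    IsMinDist S (Fintype.card F ^ (m - 1)) ∧
    Module.finrank E (dualCode S) = n - m ∧
    IsMinDist (dualCode S) 3 :=
  stmt8_general hm g hg0 hg S hS
end

section
/- For m ≥ 2, the lifted code S_{(q,m)}(q|q²) is a projective two-weight code with weight enumerator 1 + (q+1)(q^m−1) z^{q^{m−1}} + (q^m−q)(q^m−1) z^{q^{m−1}+q^{m−2}}. -/
/-!
The codewords of the lifted code are `c_j = φ_v(g_j)`, where `v ∈ E^m` and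
`φ_v : F^m → E, x ↦ ∑ xᵢ vᵢ` is `F`-linear. Since the columns `g_j` run over the points of
`PG(m-1, q)`, the zero coordinates of `c` are the points of `PG(ker φ_v)`, so a codeword whose
coefficients `v` span an `F`-space of dimension `k` has weight `q^{m-k} + ⋯ + q^{m-1}`.
As `[E : F] = 2`, only `k ≤ 2` occurs; the `v` with `k = 1` are the nonzero vectors of `ℓ^m`
for one of the `q + 1` lines `ℓ ⊆ E`, and those with `k = 2` are the rest.
-/

open Finset

open Module
open scoped LinearAlgebra.Projectivization

lemma wt_zero {ι R : Type*} [Fintype ι] [Zero R] : wt (0 : ι → R) = 0 := by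
  simp [wt]

lemma numWt_range_eq_card {R M ι : Type*} [Semiring R] [AddCommMonoid M] [Module R M] [Fintype ι]
    {L : M →ₗ[R] ι → R} (hL : Function.Injective L) (i : ℕ) :
    numWt (LinearMap.range L) i = Nat.card {v : M // wt (L v) = i} := by
  have hset : {c | c ∈ LinearMap.range L ∧ wt c = i} = L '' {v | wt (L v) = i} := by
    ext c
    aesop
  rw [numWt, hset, Set.ncard_image_of_injective _ hL]
  rfl

namespace Projectivization

variable {K V : Type*} [DivisionRing K] [AddCommGroup V] [Module K V]

lemma submodule_le_iff_rep_mem (p : ℙ K V) (W : Submodule K V) :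
    p.submodule ≤ W ↔ p.rep ∈ W := by
  rw [submodule_eq, Submodule.span_singleton_le_iff_mem]

lemma submodule_map_subtype_le (W : Submodule K V) (p : ℙ K W) :
    (map W.subtype W.injective_subtype p).submodule ≤ W := by
  induction p with
  | h w _ => simp [map_mk, Submodule.span_singleton_le_iff_mem]

lemma card_submodule_le (W : Submodule K V) :
    Nat.card {p : ℙ K V // p.submodule ≤ W} = Nat.card (ℙ K W) := by
  refine (Nat.card_congr (Equiv.ofBijective
    (fun p => ⟨map W.subtype W.injective_subtype p, submodule_map_subtype_le W p⟩) ⟨?_, ?_⟩)).symm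
  · exact fun p p' h => map_injective _ W.injective_subtype (congrArg Subtype.val h)
  · rintro ⟨p, hp⟩
    rw [submodule_le_iff_rep_mem] at hp
    refine ⟨mk K ⟨p.rep, hp⟩ (by simpa using p.rep_nonzero), Subtype.ext ?_⟩
    simp [map_mk]

end Projectivization

section ProjectivePoints

open Projectivization

variable {F V J : Type*} [Field F] [AddCommGroup V] [Module F V] {g : J → V}

lemma bijective_mk_of_existsUnique (hg0 : ∀ j, g j ≠ 0)
    (hg : ∀ v : V, v ≠ 0 → ∃! j, ∃ a : F, v = a • g j) :
    Function.Bijective fun j => mk F (g j) (hg0 j) := by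
  refine ⟨fun j₁ j₂ h => ?_, fun p => ?_⟩
  · obtain ⟨a, ha⟩ := (mk_eq_mk_iff' F _ _ _ _).1 h
    exact (hg (g j₁) (hg0 j₁)).unique ⟨1, (one_smul F _).symm⟩ ⟨a, ha.symm⟩
  · induction p with
    | h v hv =>
      obtain ⟨j, a, rfl⟩ := (hg v hv).exists
      exact ⟨j, ((mk_eq_mk_iff' F _ _ hv (hg0 j)).2 ⟨a, rfl⟩).symm⟩

variable {hg0 : ∀ j, g j ≠ 0} (hbij : Function.Bijective fun j => mk F (g j) (hg0 j))
include hbij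

lemma card_subtype_mem_eq_card_projectivization (W : Submodule F V) :
    Nat.card {j // g j ∈ W} = Nat.card (ℙ F W) := by
  rw [← card_submodule_le]
  exact Nat.card_congr ((Equiv.ofBijective _ hbij).subtypeEquiv fun j => by
    simp [Submodule.span_singleton_le_iff_mem])

lemma wt_comp_eq_sum_Ico [Fintype J] [Finite F] [FiniteDimensional F V]
    {U : Type*} [AddCommGroup U] [Module F U] (φ : V →ₗ[F] U) :
    wt (fun j => φ (g j))
      = ∑ i ∈ Ico (finrank F (LinearMap.ker φ)) (finrank F V), Nat.card F ^ i := by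
  classical
  have hJ : Nat.card J = ∑ i ∈ range (finrank F V), Nat.card F ^ i := by
    rw [Nat.card_congr (Equiv.ofBijective _ hbij), card_of_finrank F V rfl]
  have hker := card_subtype_mem_eq_card_projectivization hbij (LinearMap.ker φ)
  rw [card_of_finrank F _ rfl] at hker
  rw [← sum_range_add_sum_Ico _ (Submodule.finrank_le (LinearMap.ker φ))] at hJ
  have hwt : wt (fun j => φ (g j)) = Nat.card {j // g j ∉ LinearMap.ker φ} := by
    rw [wt, ← Nat.card_coe_set_eq]
    exact Nat.card_congr (Equiv.subtypeEquivRight fun j => by simp)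
  rw [hwt, Nat.card_eq_fintype_card, Fintype.card_subtype_compl, ← Nat.card_eq_fintype_card,
    ← Nat.card_eq_fintype_card, hJ, hker, Nat.add_sub_cancel_left]

end ProjectivePoints

lemma eq_pow_sub_mul_pow_sub_of_pow_two_pow {q n N : ℕ} (hq : 0 < q)
    (h : (q ^ 2) ^ n = 1 + (q + 1) * (q ^ n - 1) + N) : N = (q ^ n - q) * (q ^ n - 1) := by
  have hQ : 1 ≤ q ^ n := Nat.one_le_pow _ _ hq
  rw [← pow_mul, mul_comm, pow_mul] at h
  generalize q ^ n = Q at h hQ ⊢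
  have hsq : Q ^ 2 - 1 = (Q + 1) * (Q - 1) := by simpa using Nat.sq_sub_sq Q 1
  have hN : N = (Q + 1) * (Q - 1) - (q + 1) * (Q - 1) := by omega
  rw [hN, ← Nat.sub_mul, Nat.add_sub_add_right]

section RankCount

open Projectivization Submodule

variable {F U ι : Type*} [Field F] [AddCommGroup U] [Module F U]

lemma span_range_eq_submodule_iff (p : ℙ F U) (v : ι → U) :
    span F (Set.range v) = p.submodule ↔ v ≠ 0 ∧ ∀ i, v i ∈ p.submodule := by
  have hatom : IsAtom p.submodule := isAtom_iff_finrank_eq_one.2 p.finrank_submodule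
  have hbot : span F (Set.range v) = ⊥ ↔ v = 0 := by
    simp [span_eq_bot, funext_iff]
  have hle : span F (Set.range v) ≤ p.submodule ↔ ∀ i, v i ∈ p.submodule :=
    span_le.trans Set.range_subset_iff
  rw [ne_eq, ← hbot, ← hle, hatom.le_iff]
  constructor
  · rintro h
    exact ⟨h ▸ hatom.1, Or.inr h⟩
  · rintro ⟨hne, h | h⟩
    exacts [absurd h hne, h]

lemma finrank_range_eq_zero_iff [Finite ι] (v : ι → U) :
    (Set.range v).finrank F = 0 ↔ v = 0 := by
  have := FiniteDimensional.span_of_finite F (Set.finite_range v)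
  simp [Set.finrank, funext_iff]

variable [Fintype ι] [Finite U]

lemma card_span_range_eq_submodule (p : ℙ F U) :
    Nat.card {v : ι → U // span F (Set.range v) = p.submodule}
      = Nat.card F ^ Fintype.card ι - 1 := by
  have hins : {v : ι → U | ∀ i, v i ∈ p.submodule}
      = insert 0 {v | span F (Set.range v) = p.submodule} := by
    ext v
    by_cases hv : v = 0 <;> simp [hv, span_range_eq_submodule_iff]
  have hcard : {v : ι → U | ∀ i, v i ∈ p.submodule}.ncard = Nat.card F ^ Fintype.card ι := by
    change Nat.card {v : ι → U // ∀ i, v i ∈ p.submodule} = _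
    rw [Nat.card_congr Equiv.subtypePiEquivPi, Nat.card_pi, prod_const, card_univ,
      Module.natCard_eq_pow_finrank (K := F), p.finrank_submodule, pow_one]
  have h0 : (0 : ι → U) ∉ {v | span F (Set.range v) = p.submodule} := by
    simp [span_range_eq_submodule_iff]
  rw [hins, Set.ncard_insert_of_notMem h0] at hcard
  rw [← hcard, Nat.add_sub_cancel]
  rfl

lemma card_finrank_range_eq_one :
    Nat.card {v : ι → U // (Set.range v).finrank F = 1}
      = Nat.card (ℙ F U) * (Nat.card F ^ Fintype.card ι - 1) := by
  have := Fintype.ofFinite (ℙ F U)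
  let e : {v : ι → U // (Set.range v).finrank F = 1}
      ≃ Σ p : ℙ F U, {v : ι → U // span F (Set.range v) = p.submodule} :=
    { toFun := fun v => ⟨mk'' _ v.2, v.1, (submodule_mk'' _ _).symm⟩
      invFun := fun x => ⟨x.2.1, by rw [Set.finrank, x.2.2, x.1.finrank_submodule]⟩
      left_inv := fun v => rfl
      right_inv := fun ⟨p, v, hv⟩ => Sigma.subtype_ext (submodule_injective (by simp [hv])) rfl }
  simp [Nat.card_congr e, Nat.card_sigma, card_span_range_eq_submodule, Nat.card_eq_fintype_card]

lemma card_finrank_range_eq_two [Finite F] (hU : finrank F U = 2) :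
    Nat.card {v : ι → U // (Set.range v).finrank F = 2}
      = (Nat.card F ^ Fintype.card ι - Nat.card F) * (Nat.card F ^ Fintype.card ι - 1) := by
  classical
  have := Fintype.ofFinite U
  have hmem : ∀ v ∈ (univ : Finset (ι → U)), (Set.range v).finrank F ∈ range 3 :=
    fun v _ => mem_range.2 (Nat.lt_succ_of_le (hU ▸ Submodule.finrank_le _))
  have hzero : Nat.card {v : ι → U // (Set.range v).finrank F = 0} = 1 := by
    simp [finrank_range_eq_zero_iff]
  have htotal := card_eq_sum_card_fiberwise hmem
  simp only [sum_range_succ, sum_range_zero, zero_add, card_univ, ← Fintype.card_subtype,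
    ← Nat.card_eq_fintype_card, hzero, card_finrank_range_eq_one, card_of_finrank_two F U hU]
    at htotal
  rw [Nat.card_fun, Module.natCard_eq_pow_finrank (K := F) (V := U), hU,
    Nat.card_eq_fintype_card (α := ι)] at htotal
  exact eq_pow_sub_mul_pow_sub_of_pow_two_pow Nat.card_pos htotal

end RankCount

lemma strictMonoOn_sum_Ico_pow {q m : ℕ} (hq : 0 < q) :
    StrictMonoOn (fun k => ∑ i ∈ Ico (m - k) m, q ^ i) (Set.Iic m) := by
  intro a ha b hb hab
  simp only [Set.mem_Iic] at ha hb
  have hpos : 0 < ∑ i ∈ Ico (m - b) (m - a), q ^ i :=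
    sum_pos (fun i _ => pow_pos hq i) (nonempty_Ico.2 (by omega))
  simp only [← sum_Ico_consecutive _ (Nat.sub_le_sub_left hab.le m) (Nat.sub_le m a)]
  omega

lemma sum_Ico_sub_one_pow (q : ℕ) {m : ℕ} (hm : 1 ≤ m) :
    ∑ i ∈ Ico (m - 1) m, q ^ i = q ^ (m - 1) := by
  obtain ⟨n, rfl⟩ := Nat.exists_eq_add_of_le' hm
  simp

lemma sum_Ico_sub_two_pow (q : ℕ) {m : ℕ} (hm : 2 ≤ m) :
    ∑ i ∈ Ico (m - 2) m, q ^ i = q ^ (m - 1) + q ^ (m - 2) := by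
  obtain ⟨n, rfl⟩ := Nat.exists_eq_add_of_le' hm
  simp [sum_Ico_succ_top, add_comm]

section LiftedCode

variable {F E ι J : Type*} [Field F] [Field E] [Algebra F E]

lemma exists_eq_smul_of_algebraMap_eq_smul {x y : ι → F} (hy : y ≠ 0) {a : E}
    (h : (fun i => algebraMap F E (x i)) = a • fun i => algebraMap F E (y i)) :
    ∃ b : F, x = b • y := by
  obtain ⟨i₀, hi₀⟩ := Function.ne_iff.1 hy
  have ha : a = algebraMap F E (x i₀ / y i₀) := by
    rw [map_div₀, congrFun h i₀, Pi.smul_apply, smul_eq_mul,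
      mul_div_cancel_right₀ _ ((map_ne_zero _).2 hi₀)]
  refine ⟨x i₀ / y i₀, funext fun i => (algebraMap F E).injective ?_⟩
  simpa [ha] using congrFun h i

lemma algebraMap_comp_ne_smul {g : J → ι → F} {hg0 : ∀ j, g j ≠ 0}
    (hbij : Function.Bijective fun j => Projectivization.mk F (g j) (hg0 j))
    {j₁ j₂ : J} (hj : j₁ ≠ j₂) (a : E) :
    (fun i => algebraMap F E (g j₁ i)) ≠ a • fun i => algebraMap F E (g j₂ i) := fun h => by
  obtain ⟨b, hb⟩ := exists_eq_smul_of_algebraMap_eq_smul (hg0 j₂) h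
  exact hj (hbij.1 ((Projectivization.mk_eq_mk_iff' F _ _ _ _).2 ⟨b, hb.symm⟩))

variable [Fintype ι]

variable (E) in
noncomputable def liftedGenerator (g : J → ι → F) : (ι → E) →ₗ[E] (J → E) :=
  Fintype.linearCombination E fun i j => algebraMap F E (g j i)

lemma range_liftedGenerator (g : J → ι → F) :
    LinearMap.range (liftedGenerator E g)
      = Submodule.span E (Set.range fun i j => algebraMap F E (g j i)) :=
  Fintype.range_linearCombination E _

lemma liftedGenerator_apply (g : J → ι → F) (v : ι → E) (j : J) :
    liftedGenerator E g v j = Fintype.linearCombination F v (g j) := by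
  simp [liftedGenerator, Fintype.linearCombination_apply, Algebra.smul_def, mul_comm]

variable {g : J → ι → F} {hg0 : ∀ j, g j ≠ 0}
  (hbij : Function.Bijective fun j => Projectivization.mk F (g j) (hg0 j))
  [Fintype J] [Finite F]
include hbij

lemma wt_liftedGenerator (v : ι → E) :
    wt (liftedGenerator E g v) = ∑ i ∈ Ico (Fintype.card ι - (Set.range v).finrank F)
      (Fintype.card ι), Nat.card F ^ i := by
  let φ := Fintype.linearCombination F v
  have hrank := LinearMap.finrank_range_add_finrank_ker φ
  rw [Fintype.range_linearCombination, finrank_fintype_fun_eq_card] at hrank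
  rw [show liftedGenerator E g v = fun j => φ (g j) from funext (liftedGenerator_apply g v),
    wt_comp_eq_sum_Ico hbij, finrank_fintype_fun_eq_card, Set.finrank]
  congr 2
  omega

lemma liftedGenerator_injective : Function.Injective (liftedGenerator E g) := by
  refine (injective_iff_map_eq_zero _).2 fun v hv => ?_
  have hwt := wt_liftedGenerator hbij v
  rw [hv, wt_zero] at hwt
  have hle := finrank_range_le_card (R := F) v
  by_contra hv0
  have hpos : 0 < (Set.range v).finrank F :=
    Nat.pos_of_ne_zero ((finrank_range_eq_zero_iff v).not.2 hv0)
  have := sum_eq_zero_iff.1 hwt.symm (Fintype.card ι - 1) (mem_Ico.2 ⟨by omega, by omega⟩)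
  exact pow_ne_zero _ Nat.card_pos.ne' this

lemma numWt_liftedGenerator_sum_Ico {k : ℕ} (hk : k ≤ Fintype.card ι) :
    numWt (LinearMap.range (liftedGenerator E g))
        (∑ i ∈ Ico (Fintype.card ι - k) (Fintype.card ι), Nat.card F ^ i)
      = Nat.card {v : ι → E // (Set.range v).finrank F = k} := by
  rw [numWt_range_eq_card (liftedGenerator_injective hbij)]
  refine Nat.card_congr (Equiv.subtypeEquivRight fun v => ?_)
  rw [wt_liftedGenerator hbij]
  exact (strictMonoOn_sum_Ico_pow Nat.card_pos).injOn.eq_iff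
    (finrank_range_le_card (R := F) v) hk

lemma numWt_liftedGenerator_eq_zero [FiniteDimensional F E] {w : ℕ}
    (hw : ∀ k ≤ finrank F E,
      ∑ i ∈ Ico (Fintype.card ι - k) (Fintype.card ι), Nat.card F ^ i ≠ w) :
    numWt (LinearMap.range (liftedGenerator E g)) w = 0 := by
  rw [numWt_range_eq_card (liftedGenerator_injective hbij), Nat.card_eq_zero]
  left
  exact ⟨fun ⟨v, hv⟩ =>
    hw _ (Submodule.finrank_le _) ((wt_liftedGenerator hbij v).symm.trans hv)⟩

end LiftedCode

/-- for `m ≥ 2` the lifted Simplex code over `GF(q²)` is a projective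
two-weight code with weight enumerator
`1 + (q+1)(q^m-1) z^{q^{m-1}} + (q^m-q)(q^m-1) z^{q^{m-1}+q^{m-2}}`. -/
theorem stmt12 {F E : Type*} [Field F] [Field E] [Algebra F E] [Fintype F] [Fintype E]
    {m n  : ℕ} (hm : 2 ≤ m) 
    (hE : Fintype.card E = Fintype.card F ^ 2)
    (g : Fin n → (Fin m → F)) (hg0 : ∀ i, g i ≠ 0)
    (hg : ∀ v : Fin m → F, v ≠ 0 → ∃! i : Fin n, ∃ a : F, v = a • g i)
    (S : Submodule E (Fin n → E))
    (hS : S = Submodule.span E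
      (Set.range fun i : Fin m => fun j : Fin n => algebraMap F E (g j i))) :
    (∀ j1 j2 : Fin n, j1 ≠ j2 → ∀ a : E,
      (fun i : Fin m => algebraMap F E (g j1 i)) ≠ a • fun i : Fin m => algebraMap F E (g j2 i)) ∧
    numWt S 0 = 1 ∧
    numWt S (Fintype.card F ^ (m - 1)) = (Fintype.card F + 1) * (Fintype.card F ^ m - 1) ∧
    numWt S (Fintype.card F ^ (m - 1) + Fintype.card F ^ (m - 2))
      = (Fintype.card F ^ m - Fintype.card F) * (Fintype.card F ^ m - 1) ∧
    ∀ i, i ≠ 0 → i ≠ Fintype.card F ^ (m - 1) →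
      i ≠ Fintype.card F ^ (m - 1) + Fintype.card F ^ (m - 2) → numWt S i = 0 := by
  have hbij := bijective_mk_of_existsUnique hg0 hg
  have hE2 : finrank F E = 2 :=
    Nat.pow_right_injective (Fintype.one_lt_card (α := F)) <| by
      simp only [← Module.card_eq_pow_finrank (K := F) (V := E), hE]
  have hcount := fun k => numWt_liftedGenerator_sum_Ico (E := E) (k := k) hbij
  simp only [Fintype.card_fin, Nat.card_eq_fintype_card (α := F)] at hcount
  rw [hS, ← range_liftedGenerator]
  refine ⟨fun j₁ j₂ hj a => algebraMap_comp_ne_smul hbij hj a, ?_, ?_, ?_, fun w h0 h1 h2 => ?_⟩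
  · simpa [finrank_range_eq_zero_iff] using hcount 0 (Nat.zero_le m)
  · rw [← sum_Ico_sub_one_pow _ (by omega), hcount 1 (by omega), card_finrank_range_eq_one,
      Projectivization.card_of_finrank_two F E hE2]
    simp
  · rw [← sum_Ico_sub_two_pow _ hm, hcount 2 hm, card_finrank_range_eq_two hE2]
    simp
  · refine numWt_liftedGenerator_eq_zero hbij fun k hk => ?_
    rw [hE2] at hk
    interval_cases k
    · simpa using h0.symm
    · simpa [sum_Ico_sub_one_pow _ (by omega : 1 ≤ m)] using h1.symm
    · simpa [sum_Ico_sub_two_pow _ hm] using h2.symm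
end

section
/- For m ≥ 2 and 1 ≤ r ≤ ℓ ≤ m, the supports of codewords of weight q^{m−r}(q^r−1)/(q−1) in the lifted Simplex code S_{(q,m)}(q|q^ℓ) form a 2-design on the n = (q^m−1)/(q−1) coordinate points. -/
open Finset

/-!
A codeword of the lifted Simplex code is `j ↦ φ (g j)` for an `F`-linear `φ : F^m → E`, so its
support is the set of points outside the subspace `ker φ`. Each point has `q - 1` nonzero multiples,
whence `(q - 1) · wt = q^m - q^(dim ker φ)`: the codewords of weight `q^(m-r) (q^r - 1)/(q - 1)`
are those with `dim ker φ = m - r`, and since `r ≤ ℓ = dim_F E` every subspace of that dimension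
is such a kernel. So the blocks through two points correspond to the `(m - r)`-subspaces avoiding
both, and `GL(F^m)`, transitive on pairs of independent vectors, makes their number independent of
the pair. It is positive because a hyperplane avoiding both points has subspaces of every smaller
dimension.
-/

open Module

/-- For `V = F^m`, the columns of a generator matrix of the Simplex code. -/
structure IsProjectiveEnumeration_s14 (F : Type*) {ι V : Type*} [Field F] [AddCommGroup V]
    [Module F V] (g : ι → V) : Prop where
  ne_zero : ∀ i, g i ≠ 0
  existsUnique : ∀ v : V, v ≠ 0 → ∃! i, ∃ a : F, v = a • g i

namespace IsProjectiveEnumeration_s14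

variable {F ι V : Type*} [Field F] [AddCommGroup V] [Module F V] {g : ι → V}

theorem eq_of_smul_eq_smul (hg : IsProjectiveEnumeration_s14 F g) {a b : F} {i j : ι}
    (h : a • g i = b • g j) (hb : b ≠ 0) : i = j := by
  obtain ⟨k, -, hk⟩ := hg.existsUnique (b • g j) (smul_ne_zero hb (hg.ne_zero j))
  exact (hk i ⟨a, h.symm⟩).trans (hk j ⟨b, rfl⟩).symm

theorem linearIndependent_pair (hg : IsProjectiveEnumeration_s14 F g) {i j : ι} (hij : i ≠ j) :
    LinearIndependent F ![g i, g j] :=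
  (LinearIndependent.pair_iff' (hg.ne_zero i)).mpr fun a h =>
    hij (hg.eq_of_smul_eq_smul (a := a) (b := 1) (by rwa [one_smul]) one_ne_zero)

theorem injective_unitsSMul (hg : IsProjectiveEnumeration_s14 F g) :
    Function.Injective fun p : ι × Fˣ => p.2 • g p.1 := by
  rintro ⟨i, a⟩ ⟨j, b⟩ h
  simp only [Units.smul_def] at h
  obtain rfl := hg.eq_of_smul_eq_smul h b.ne_zero
  simp only [Prod.mk.injEq, true_and]
  exact Units.ext (smul_left_injective F (hg.ne_zero i) h)

theorem image_unitsSMul_notMem (hg : IsProjectiveEnumeration_s14 F g) (K : Submodule F V) :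
    (fun p : ι × Fˣ => p.2 • g p.1) '' {p | g p.1 ∉ K} = (K : Set V)ᶜ := by
  ext v
  constructor
  · rintro ⟨⟨i, a⟩, hi, rfl⟩
    exact (K.smul_mem_iff' a).not.mpr hi
  · intro hv
    obtain ⟨i, ⟨a, rfl⟩, -⟩ := hg.existsUnique v fun h => hv (h ▸ K.zero_mem)
    have ha : a ≠ 0 := by
      rintro rfl
      exact hv (by simp)
    exact ⟨(i, Units.mk0 a ha), fun hi => hv (K.smul_mem a hi), rfl⟩

theorem le_of_forall_mem_imp (hg : IsProjectiveEnumeration_s14 F g) {K L : Submodule F V}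
    (h : ∀ i, g i ∈ K → g i ∈ L) : K ≤ L := by
  intro v hvK
  by_contra hvL
  rw [← SetLike.mem_coe, ← Set.mem_compl_iff, ← hg.image_unitsSMul_notMem L] at hvL
  obtain ⟨⟨i, a⟩, hi, rfl⟩ := hvL
  exact hi (h i ((K.smul_mem_iff' a).mp hvK))

theorem injective_setOf_notMem (hg : IsProjectiveEnumeration_s14 F g) :
    Function.Injective fun K : Submodule F V => {i | g i ∉ K} := by
  intro K L h
  have hKL : ∀ i, g i ∈ K ↔ g i ∈ L := fun i => not_iff_not.mp (Set.ext_iff.mp h i)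
  exact le_antisymm (hg.le_of_forall_mem_imp fun i => (hKL i).mp)
    (hg.le_of_forall_mem_imp fun i => (hKL i).mpr)

theorem card_sub_one_mul_ncard_notMem [Fintype F] [FiniteDimensional F V]
    (hg : IsProjectiveEnumeration_s14 F g) (K : Submodule F V) :
    (Fintype.card F - 1) * {i | g i ∉ K}.ncard
      = Fintype.card F ^ finrank F V - Fintype.card F ^ finrank F K := by
  have hV : Nat.card V = Fintype.card F ^ finrank F V := by
    rw [Module.natCard_eq_pow_finrank (K := F), Nat.card_eq_fintype_card]
  have hK : Nat.card K = Fintype.card F ^ finrank F K := by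
    rw [Module.natCard_eq_pow_finrank (K := F), Nat.card_eq_fintype_card]
  calc (Fintype.card F - 1) * {i | g i ∉ K}.ncard
      = ({i | g i ∉ K} ×ˢ (Set.univ : Set Fˣ)).ncard := by
        rw [Set.ncard_prod, Set.ncard_univ, Nat.card_units, Nat.card_eq_fintype_card, mul_comm]
    _ = ((K : Set V)ᶜ).ncard := by
        rw [← hg.image_unitsSMul_notMem K, Set.ncard_image_of_injective _ hg.injective_unitsSMul]
        congr 1
        ext p
        simp
    _ = _ := by
        have : Finite V := Module.finite_of_finite F
        rw [Set.ncard_compl, ← Nat.card_coe_set_eq, ← hV, ← hK]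
        rfl

end IsProjectiveEnumeration_s14

section LinearAlgebra

variable {F V : Type*} [Field F] [AddCommGroup V] [Module F V]

theorem Module.Basis.sumExtend_inl {ι : Type*} {u : ι → V} (hu : LinearIndependent F u) (i : ι) :
    Basis.sumExtend hu (Sum.inl i) = u i := by
  simp [Basis.sumExtend, Equiv.Set.sumDiffSubset]
  rfl

theorem exists_linearEquiv_apply_eq [FiniteDimensional F V] {ι : Type*} {u w : ι → V}
    (hu : LinearIndependent F u) (hw : LinearIndependent F w) :
    ∃ σ : V ≃ₗ[F] V, ∀ i, σ (u i) = w i := by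
  let bu := Basis.sumExtend hu
  let bw := Basis.sumExtend hw
  have := Module.Finite.finite_basis bu
  have := Module.Finite.finite_basis bw
  have : Finite ι := hu.finite
  have : Finite (Basis.sumExtendIndex hu) :=
    Finite.of_injective (Sum.inr (α := ι)) Sum.inr_injective
  have : Finite (Basis.sumExtendIndex hw) :=
    Finite.of_injective (Sum.inr (α := ι)) Sum.inr_injective
  obtain ⟨e⟩ : Nonempty (Basis.sumExtendIndex hu ≃ Basis.sumExtendIndex hw) := by
    rw [← Finite.card_eq]
    have h := (finrank_eq_nat_card_basis bu).symm.trans (finrank_eq_nat_card_basis bw)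
    rw [Nat.card_sum, Nat.card_sum] at h
    omega
  refine ⟨bu.equiv bw (Equiv.sumCongr (Equiv.refl ι) e), fun i => ?_⟩
  rw [← Basis.sumExtend_inl hu, ← Basis.sumExtend_inl hw, Basis.equiv_apply]
  rfl

theorem Submodule.exists_ker_eq {W : Type*} [AddCommGroup W] [Module F W]
    [FiniteDimensional F V] (K : Submodule F V) (h : finrank F (V ⧸ K) ≤ finrank F W) :
    ∃ φ : V →ₗ[F] W, LinearMap.ker φ = K := by
  obtain ⟨u, hu⟩ := exists_linearIndependent_of_le_finrank h
  refine ⟨(Module.finBasis F (V ⧸ K)).constr F u ∘ₗ K.mkQ, ?_⟩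
  rw [LinearMap.ker_comp, LinearMap.ker_eq_bot.mpr
    ((Module.finBasis F (V ⧸ K)).injective_constr_of_linearIndependent hu),
    Submodule.comap_bot, Submodule.ker_mkQ]

def avoidingSubspaces (F : Type*) {V : Type*} [Field F] [AddCommGroup V] [Module F V]
    (d : ℕ) (s : Set V) : Set (Submodule F V) :=
  {K | finrank F K = d ∧ ∀ v ∈ s, v ∉ K}

theorem avoidingSubspaces_range_nonempty [FiniteDimensional F V] {ι : Type*} {u : ι → V}
    (hu : LinearIndependent F u) {d : ℕ} (hd : d < finrank F V) :
    (avoidingSubspaces F d (Set.range u)).Nonempty := by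
  -- a hyperplane missing every `u i`: the kernel of the coordinate sum in a basis extending `u`
  let f := (Basis.sumExtend hu).sumCoords
  have hf (i : ι) : f (u i) = 1 := by
    rw [← Basis.sumExtend_inl hu, Basis.sumCoords_self_apply]
  have hker : d ≤ finrank F (LinearMap.ker f) := by
    have h1 := LinearMap.finrank_range_add_finrank_ker f
    have h2 := Submodule.finrank_le (LinearMap.range f)
    rw [finrank_self] at h2
    omega
  obtain ⟨v, hv⟩ := exists_linearIndependent_of_le_finrank hker
  refine ⟨Submodule.span F (Set.range ((LinearMap.ker f).subtype ∘ v)), ?_, ?_⟩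
  · rw [finrank_span_eq_card (hv.map' _ (LinearMap.ker f).ker_subtype), Fintype.card_fin]
  · rintro _ ⟨i, rfl⟩ hi
    have hle : Submodule.span F (Set.range ((LinearMap.ker f).subtype ∘ v)) ≤ LinearMap.ker f :=
      Submodule.span_le.mpr (by rintro _ ⟨j, rfl⟩; exact (v j).2)
    simpa [hf] using hle hi

theorem image_map_avoidingSubspaces {W : Type*} [AddCommGroup W] [Module F W] (σ : V ≃ₗ[F] W)
    (d : ℕ) (s : Set V) :
    Submodule.map (σ : V →ₗ[F] W) '' avoidingSubspaces F d s = avoidingSubspaces F d (σ '' s) := by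
  ext L
  constructor
  · rintro ⟨K, ⟨hK, hs⟩, rfl⟩
    refine ⟨(σ.finrank_map_eq K).trans hK, ?_⟩
    rintro _ ⟨v, hv, rfl⟩ h
    rw [Submodule.mem_map_equiv, σ.symm_apply_apply] at h
    exact hs v hv h
  · rintro ⟨hL, hs⟩
    refine ⟨Submodule.map (σ.symm : W →ₗ[F] V) L, ⟨(σ.symm.finrank_map_eq L).trans hL, ?_⟩, ?_⟩
    · intro v hv h
      rw [Submodule.mem_map_equiv, σ.symm_symm] at h
      exact hs (σ v) ⟨v, hv, rfl⟩ h
    · rw [← Submodule.comap_equiv_eq_map_symm, Submodule.map_comap_eq_of_surjective σ.surjective]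

theorem ncard_avoidingSubspaces_range_eq [FiniteDimensional F V] {ι : Type*} {u w : ι → V}
    (hu : LinearIndependent F u) (hw : LinearIndependent F w) (d : ℕ) :
    (avoidingSubspaces F d (Set.range u)).ncard = (avoidingSubspaces F d (Set.range w)).ncard := by
  obtain ⟨σ, hσ⟩ := exists_linearEquiv_apply_eq hu hw
  have hrange : Set.range w = σ '' Set.range u := by
    rw [← Set.range_comp]
    exact congrArg Set.range (funext fun i => (hσ i).symm)
  rw [hrange, ← image_map_avoidingSubspaces,
    Set.ncard_image_of_injective _ (Submodule.map_injective_of_injective σ.injective)]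

end LinearAlgebra

theorem eq_pow_mul_div_iff_of_sub_one_mul_eq {q M d r w : ℕ} (hq : 2 ≤ q) (hd : d ≤ M)
    (hr : r ≤ M) (hw : (q - 1) * w = q ^ M - q ^ d) :
    w = q ^ (M - r) * ((q ^ r - 1) / (q - 1)) ↔ d = M - r := by
  have hweight : (q - 1) * (q ^ (M - r) * ((q ^ r - 1) / (q - 1))) = q ^ M - q ^ (M - r) := by
    rw [mul_left_comm, Nat.mul_div_cancel' (Nat.sub_one_dvd_pow_sub_one q r), Nat.mul_sub,
      mul_one, ← pow_add, Nat.sub_add_cancel hr]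
  have hdM : q ^ d ≤ q ^ M := Nat.pow_le_pow_right (by omega) hd
  have hrM : q ^ (M - r) ≤ q ^ M := Nat.pow_le_pow_right (by omega) (Nat.sub_le M r)
  calc w = q ^ (M - r) * ((q ^ r - 1) / (q - 1))
      ↔ (q - 1) * w = (q - 1) * (q ^ (M - r) * ((q ^ r - 1) / (q - 1))) :=
        (Nat.mul_left_cancel_iff (by omega)).symm
    _ ↔ q ^ d = q ^ (M - r) := by rw [hw, hweight]; omega
    _ ↔ d = M - r := (Nat.pow_right_injective hq).eq_iff

section SimplexCode

variable {F ι : Type*} [Field F]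

theorem IsProjectiveEnumeration_s14.wt_eq_iff_finrank_ker [Fintype F] [Fintype ι] {V W : Type*}
    [AddCommGroup V] [Module F V] [FiniteDimensional F V] [AddCommGroup W] [Module F W]
    {g : ι → V} (hg : IsProjectiveEnumeration_s14 F g) (φ : V →ₗ[F] W) {r : ℕ}
    (hr : r ≤ finrank F V) :
    wt (fun j => φ (g j)) = Fintype.card F ^ (finrank F V - r) *
        ((Fintype.card F ^ r - 1) / (Fintype.card F - 1)) ↔
      finrank F (LinearMap.ker φ) = finrank F V - r :=
  eq_pow_mul_div_iff_of_sub_one_mul_eq Fintype.one_lt_card (Submodule.finrank_le _) hr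
    (hg.card_sub_one_mul_ncard_notMem (LinearMap.ker φ))

variable {E : Type*} [Field E] [Algebra F E] {m : ℕ}

theorem mem_span_columns_iff (g : ι → Fin m → F) (c : ι → E) :
    c ∈ Submodule.span E (Set.range fun i : Fin m => fun j : ι => algebraMap F E (g j i)) ↔
      ∃ φ : (Fin m → F) →ₗ[F] E, ∀ j, c j = φ (g j) := by
  rw [Submodule.mem_span_range_iff_exists_fun]
  constructor
  · rintro ⟨v, rfl⟩
    refine ⟨Fintype.linearCombination F v, fun j => ?_⟩
    simp [Fintype.linearCombination_apply, Finset.sum_apply, Algebra.smul_def, mul_comm]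
  · rintro ⟨φ, hφ⟩
    refine ⟨fun i => φ (Pi.basisFun F (Fin m) i), funext fun j => ?_⟩
    conv_rhs =>
      rw [hφ, ← (Pi.basisFun F (Fin m)).constr_self F φ, Module.Basis.constr_apply_fintype]
    simp [Finset.sum_apply, Algebra.smul_def, mul_comm]

theorem codeSupports_span_columns [Fintype F] [Fintype E] [Fintype ι] {ℓ r : ℕ}
    {g : ι → Fin m → F} (hg : IsProjectiveEnumeration_s14 F g)
    (hE : Fintype.card E = Fintype.card F ^ ℓ) (hrℓ : r ≤ ℓ) (hrm : r ≤ m) :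
    codeSupports
        (Submodule.span E (Set.range fun i : Fin m => fun j : ι => algebraMap F E (g j i)))
        (Fintype.card F ^ (m - r) * ((Fintype.card F ^ r - 1) / (Fintype.card F - 1)))
      = (fun K => {j | g j ∉ K}) '' {K : Submodule F (Fin m → F) | finrank F K = m - r} := by
  have hwt (φ : (Fin m → F) →ₗ[F] E) := hg.wt_eq_iff_finrank_ker φ (r := r) (by simpa using hrm)
  simp only [finrank_fin_fun] at hwt
  ext s
  simp only [codeSupports, mem_span_columns_iff]
  constructor
  · rintro ⟨c, ⟨φ, hφ⟩, hc, rfl⟩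
    obtain rfl : c = fun j => φ (g j) := funext hφ
    exact ⟨LinearMap.ker φ, (hwt φ).mp hc, rfl⟩
  · rintro ⟨K, hK : finrank F K = m - r, rfl⟩
    have hEℓ : finrank F E = ℓ :=
      Nat.pow_right_injective Fintype.one_lt_card (Module.card_eq_pow_finrank.symm.trans hE)
    obtain ⟨φ, rfl⟩ := K.exists_ker_eq (W := E) (by
      have := K.finrank_quotient_add_finrank
      rw [finrank_fin_fun] at this
      omega)
    exact ⟨fun j => φ (g j), ⟨φ, fun _ => rfl⟩, (hwt φ).mpr hK, rfl⟩

theorem ncard_supports_superset_eq [Fintype F] [Fintype E] [Fintype ι] {ℓ r : ℕ}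
    {g : ι → Fin m → F} (hg : IsProjectiveEnumeration_s14 F g)
    (hE : Fintype.card E = Fintype.card F ^ ℓ) (hrℓ : r ≤ ℓ) (hrm : r ≤ m) (T : Set ι) :
    {s ∈ codeSupports
        (Submodule.span E (Set.range fun i : Fin m => fun j : ι => algebraMap F E (g j i)))
        (Fintype.card F ^ (m - r) * ((Fintype.card F ^ r - 1) / (Fintype.card F - 1))) |
      T ⊆ s}.ncard = (avoidingSubspaces F (m - r) (g '' T)).ncard := by
  rw [codeSupports_span_columns hg hE hrℓ hrm,
    ← Set.ncard_image_of_injective _ hg.injective_setOf_notMem]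
  congr 1
  ext s
  constructor
  · rintro ⟨⟨K, hK, rfl⟩, hT⟩
    exact ⟨K, ⟨hK, by rintro _ ⟨j, hj, rfl⟩; exact hT hj⟩, rfl⟩
  · rintro ⟨K, ⟨hK, hT⟩, rfl⟩
    exact ⟨⟨K, hK, rfl⟩, fun j hj => hT _ ⟨j, hj, rfl⟩⟩

end SimplexCode

theorem stmt14_general {F E : Type*} [Field F] [Field E] [Algebra F E] [Fintype F] [Fintype E]
    {m n ℓ r : ℕ} (hr1 : 1 ≤ r) (hrl : r ≤ ℓ) (hlm : ℓ ≤ m)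
    (hE : Fintype.card E = Fintype.card F ^ ℓ)
    (g : Fin n → (Fin m → F)) (hg0 : ∀ i, g i ≠ 0)
    (hg : ∀ v : Fin m → F, v ≠ 0 → ∃! i : Fin n, ∃ a : F, v = a • g i)
    (S : Submodule E (Fin n → E))
    (hS : S = Submodule.span E
      (Set.range fun i : Fin m => fun j : Fin n => algebraMap F E (g j i))) :
    ∃ lam : ℕ, 0 < lam ∧ ∀ T : Finset (Fin n), T.card = 2 →
      Set.ncard {s ∈ codeSupports S
          (Fintype.card F ^ (m - r) * ((Fintype.card F ^ r - 1) / (Fintype.card F - 1))) |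
        ↑T ⊆ s} = lam := by
  subst hS
  have hP : IsProjectiveEnumeration_s14 F g := ⟨hg0, hg⟩
  have hrm : r ≤ m := hrl.trans hlm
  by_cases hpair : ∃ i₁ i₂ : Fin n, i₁ ≠ i₂
  · obtain ⟨i₁, i₂, hi⟩ := hpair
    refine ⟨(avoidingSubspaces F (m - r) (Set.range ![g i₁, g i₂])).ncard, ?_, fun T hT => ?_⟩
    · exact (Set.ncard_pos (Set.toFinite _)).mpr
        (avoidingSubspaces_range_nonempty (hP.linearIndependent_pair hi)
          (by rw [finrank_fin_fun]; omega))
    · obtain ⟨j₁, j₂, hj, rfl⟩ := Finset.card_eq_two.mp hT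
      rw [ncard_supports_superset_eq hP hE hrl hrm, Finset.coe_pair, Set.image_pair,
        ← Matrix.range_cons_cons_empty _ _ ![]]
      exact ncard_avoidingSubspaces_range_eq (hP.linearIndependent_pair hj)
        (hP.linearIndependent_pair hi) _
  · refine ⟨1, one_pos, fun T hT => ?_⟩
    obtain ⟨j₁, j₂, hj, -⟩ := Finset.card_eq_two.mp hT
    exact absurd ⟨j₁, j₂, hj⟩ hpair

/-- for `m ≥ 2` and `1 ≤ r ≤ ℓ ≤ m`, the supports of the codewords of weight
`q^{m-r}(q^r-1)/(q-1)` in the lifted Simplex code form a 2-design on the `n` coordinates. -/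
theorem stmt14 {F E : Type*} [Field F] [Field E] [Algebra F E] [Fintype F] [Fintype E]
    {m n ℓ r : ℕ} (hm : 2 ≤ m) (hr1 : 1 ≤ r) (hrl : r ≤ ℓ) (hlm : ℓ ≤ m)
    (hE : Fintype.card E = Fintype.card F ^ ℓ)
    (g : Fin n → (Fin m → F)) (hg0 : ∀ i, g i ≠ 0)
    (hg : ∀ v : Fin m → F, v ≠ 0 → ∃! i : Fin n, ∃ a : F, v = a • g i)
    (S : Submodule E (Fin n → E))
    (hS : S = Submodule.span E
      (Set.range fun i : Fin m => fun j : Fin n => algebraMap F E (g j i))) :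
    ∃ lam : ℕ, 0 < lam ∧ ∀ T : Finset (Fin n), T.card = 2 →
      Set.ncard {s ∈ codeSupports S
          (Fintype.card F ^ (m - r) * ((Fintype.card F ^ r - 1) / (Fintype.card F - 1))) |
        ↑T ⊆ s} = lam :=
  stmt14_general hr1 hrl hlm hE g hg0 hg S hS
end

section
/- For m ≥ 3 and 1 ≤ ℓ ≤ m, the weight distribution of the lifted first-order Reed-Muller code RM₂(1,m)(2|2^ℓ) is: A₀ = 1; A_{2^m − 2^{m−h}} = 2^h ∏_{j=1}^{h} ((2^ℓ−2^{j−1})(2^m−2^{j−1}))/(2^{j−1}(2^j−1)) for each 1 ≤ h ≤ ℓ; A_{2^m} = 2^{ℓ(m+1)} − 1 − ∑_{h=1}^{ℓ} A_{2^m−2^{m−h}}; and A_i = 0 for all other i. -/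
open Finset

/-!
Every word of the lifted code is the affine map `x ↦ L x + c`, `L x = ∑ i, x i • v i`, for a
unique `(v, c) ∈ E^m × E`. If `c ∉ range L` the word has no zeros; otherwise its zeros form a coset
of `ker L`, so its weight is `2^m - 2^(m - rank L)`, where `rank L = dim span v`.
Hence `A_{2^m - 2^(m-h)} = 2^h N(m, h)`, where `N(m, h)` counts the `m`-tuples of `E` spanning an
`h`-dimensional `GF(2)`-subspace. Appending a vector to a tuple either keeps its span or enlarges
it, which gives `N(m+1, h+1) = 2^(h+1) N(m, h+1) + (2^ℓ - 2^h) N(m, h)`; the product formula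
solves this recursion. The words of weight `2^m` are all the others.
-/

open Module Submodule

theorem prod_range_succ_pow_sub_pow {R : Type*} [CommRing R] (q : R) (m h : ℕ) :
    ∏ j ∈ range (h + 1), (q ^ (m + 1) - q ^ j) =
      (q ^ (m + 1) - 1) * (q ^ h * ∏ j ∈ range h, (q ^ m - q ^ j)) := by
  have hfactor : ∀ j, q ^ (m + 1) - q ^ (j + 1) = q * (q ^ m - q ^ j) := fun j => by ring
  rw [prod_range_succ', mul_comm]
  simp [hfactor, prod_mul_distrib]

theorem card_filter_fin_cons {α : Type*} [Fintype α] {m : ℕ} (P : (Fin (m + 1) → α) → Prop)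
    [DecidablePred P] : #{w | P w} = ∑ v : Fin m → α, #{a | P (Fin.cons a v)} := by
  simp only [card_filter]
  rw [← (Fin.consEquiv fun _ => α).sum_comp, Fintype.sum_prod_type_right]
  rfl

theorem two_pow_sub_two_pow_sub_lt (m h : ℕ) : 2 ^ m - 2 ^ (m - h) < 2 ^ m :=
  Nat.sub_lt (Nat.two_pow_pos m) (Nat.two_pow_pos _)

theorem two_pow_sub_two_pow_sub_injOn (m : ℕ) :
    Set.InjOn (fun h => 2 ^ m - 2 ^ (m - h)) (Set.Iic m) := by
  intro a ha b hb hab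
  have hle : ∀ h, 2 ^ (m - h) ≤ 2 ^ m := fun h => Nat.pow_le_pow_right two_pos (m.sub_le h)
  have : m - a = m - b := Nat.pow_right_injective le_rfl <| show 2 ^ (m - a) = 2 ^ (m - b) by
    have := hle a; have := hle b; simp only at hab; omega
  simp only [Set.mem_Iic] at ha hb
  omega

section FamiliesOfRank

variable {K V : Type*} [Field K] [AddCommGroup V] [Module K V]

theorem Set.finrank_range_cons_of_mem {m : ℕ} {a : V} {v : Fin m → V}
    (ha : a ∈ span K (Set.range v)) :
    (Set.range (Fin.cons a v : Fin (m + 1) → V)).finrank K = (Set.range v).finrank K := by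
  rw [Set.finrank, Fin.range_cons, span_insert,
    sup_eq_right.mpr ((span_singleton_le_iff_mem _ _).mpr ha), Set.finrank]

theorem Set.finrank_range_cons_of_notMem [Module.Finite K V] {m : ℕ} {a : V} {v : Fin m → V}
    (ha : a ∉ span K (Set.range v)) :
    (Set.range (Fin.cons a v : Fin (m + 1) → V)).finrank K = (Set.range v).finrank K + 1 := by
  rw [Set.finrank, Fin.range_cons, span_insert, sup_comm]
  exact finrank_sup_span_singleton ha

variable [Fintype V]

variable (K V) in
noncomputable def numFamiliesOfRank (m h : ℕ) : ℕ :=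
  #{v : Fin m → V | (Set.range v).finrank K = h}

theorem numFamiliesOfRank_zero_right (m : ℕ) : numFamiliesOfRank K V m 0 = 1 := by
  have hzero : ∀ v : Fin m → V, (Set.range v).finrank K = 0 ↔ v = 0 := fun v => by
    rw [Set.finrank, Submodule.finrank_eq_zero, span_eq_bot, Set.forall_mem_range, funext_iff]
    rfl
  classical
  rw [numFamiliesOfRank, filter_congr fun v _ => hzero v, filter_eq', if_pos (mem_univ _),
    card_singleton]

theorem numFamiliesOfRank_zero_succ (h : ℕ) : numFamiliesOfRank K V 0 (h + 1) = 0 := by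
  simp [numFamiliesOfRank, Set.range_eq_empty, Set.finrank_empty]

variable [Fintype K]

theorem card_filter_finrank_range_cons {m : ℕ} (v : Fin m → V) (h : ℕ) :
    (#{a | (Set.range (Fin.cons a v : Fin (m + 1) → V)).finrank K = h + 1} : ℤ) =
      (if (Set.range v).finrank K = h + 1 then (Fintype.card K : ℤ) ^ (h + 1) else 0) +
      if (Set.range v).finrank K = h then
        (Fintype.card K : ℤ) ^ finrank K V - Fintype.card K ^ h
      else 0 := by
  classical
  set S := span K (Set.range v)
  have hcons : ∀ a, (Set.range (Fin.cons a v : Fin (m + 1) → V)).finrank K =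
      if a ∈ S then (Set.range v).finrank K else (Set.range v).finrank K + 1 := fun a => by
    split_ifs with ha
    exacts [Set.finrank_range_cons_of_mem ha, Set.finrank_range_cons_of_notMem ha]
  have hS : #{a | a ∈ S} = Fintype.card K ^ (Set.range v).finrank K := by
    rw [← Fintype.card_subtype]; exact card_eq_pow_finrank
  have hle : Fintype.card K ^ (Set.range v).finrank K ≤ Fintype.card K ^ finrank K V :=
    pow_le_pow_right₀ Fintype.card_pos (finrank_le S)
  simp_rw [hcons]
  generalize (Set.range v).finrank K = r at hS hle ⊢
  by_cases hr : r = h + 1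
  · subst hr
    simp [hS]
  by_cases hr' : r = h
  · subst hr'
    have hfilter : univ.filter (fun a : V => (if a ∈ S then r else r + 1) = r + 1) =
        univ.filter (· ∉ S) := by
      ext a; by_cases ha : a ∈ S <;> simp [ha]
    rw [hfilter, filter_not, card_sdiff_of_subset (filter_subset _ _), card_univ, hS,
      card_eq_pow_finrank (K := K), Nat.cast_sub hle]
    simp
  · rw [filter_false_of_mem fun a _ => by split_ifs <;> omega]
    simp [hr, hr']

theorem numFamiliesOfRank_succ_succ (m h : ℕ) :
    (numFamiliesOfRank K V (m + 1) (h + 1) : ℤ) =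
      (Fintype.card K : ℤ) ^ (h + 1) * numFamiliesOfRank K V m (h + 1) +
      ((Fintype.card K : ℤ) ^ finrank K V - Fintype.card K ^ h) * numFamiliesOfRank K V m h := by
  rw [numFamiliesOfRank, card_filter_fin_cons (fun w => (Set.range w).finrank K = h + 1)]
  simp only [Nat.cast_sum, card_filter_finrank_range_cons]
  simp [sum_add_distrib, sum_ite, mul_comm, numFamiliesOfRank]
  ring

theorem numFamiliesOfRank_mul_prod (m h : ℕ) :
    (numFamiliesOfRank K V m h : ℤ) *
        ∏ j ∈ range h, ((Fintype.card K : ℤ) ^ j * (Fintype.card K ^ (j + 1) - 1)) =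
      ∏ j ∈ range h,
        (((Fintype.card K : ℤ) ^ finrank K V - Fintype.card K ^ j) *
          (Fintype.card K ^ m - Fintype.card K ^ j)) := by
  set q : ℤ := (Fintype.card K : ℤ)
  induction m generalizing h with
  | zero =>
    cases h with
    | zero => simp [numFamiliesOfRank_zero_right]
    | succ h => simp [numFamiliesOfRank_zero_succ, prod_range_succ']
  | succ m ih =>
    cases h with
    | zero => simp [numFamiliesOfRank_zero_right]
    | succ h =>
      have ih₁ := ih (h + 1)
      have ih₀ := ih h
      simp only [prod_mul_distrib] at ih₀ ih₁ ⊢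
      rw [prod_range_succ_pow_sub_pow, numFamiliesOfRank_succ_succ]
      simp only [prod_range_succ] at ih₁ ⊢
      linear_combination q ^ (h + 1) * ih₁ +
        (q ^ finrank K V - q ^ h) * (q ^ h * (q ^ (h + 1) - 1)) * ih₀

theorem numFamiliesOfRank_eq_prod (m h : ℕ) :
    (numFamiliesOfRank K V m h : ℚ) =
      ∏ j ∈ range h,
        (((Fintype.card K : ℚ) ^ finrank K V - Fintype.card K ^ j) *
            (Fintype.card K ^ m - Fintype.card K ^ j)) /
          ((Fintype.card K : ℚ) ^ j * (Fintype.card K ^ (j + 1) - 1)) := by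
  have hq : (1 : ℚ) < Fintype.card K := by exact_mod_cast Fintype.one_lt_card
  have hD :
      ∏ j ∈ range h, ((Fintype.card K : ℚ) ^ j * (Fintype.card K ^ (j + 1) - 1)) ≠ 0 :=
    prod_ne_zero_iff.mpr fun j _ =>
      mul_ne_zero (by positivity) (sub_ne_zero.mpr (one_lt_pow₀ hq j.succ_ne_zero).ne')
  rw [prod_div_distrib, eq_div_iff hD]
  exact_mod_cast numFamiliesOfRank_mul_prod m h

end FamiliesOfRank

section WeightOfAffineMap

variable {R W V : Type*} [Ring R] [AddCommGroup W] [Module R W] [Fintype W]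
  [AddCommGroup V] [Module R V]

theorem wt_eq_card_sub_card_filter {ι M : Type*} [Fintype ι] [Zero M] [DecidableEq M]
    (c : ι → M) : wt c = Fintype.card ι - #{j | c j = 0} := by
  classical
  rw [wt, Set.ncard_eq_toFinset_card', Set.toFinset_ofPred, filter_not,
    card_sdiff_of_subset (filter_subset _ _), card_univ]

theorem wt_linearMap_add_of_mem_range (L : W →ₗ[R] V) {c : V} (hc : c ∈ LinearMap.range L) :
    wt (fun x => L x + c) = Fintype.card W - Nat.card (LinearMap.ker L) := by
  classical
  have hneg : -c ∈ Set.range L := neg_mem hc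
  rw [wt_eq_card_sub_card_filter]
  simp_rw [add_eq_zero_iff_eq_neg]
  rw [AddMonoidHom.card_fiber_eq_of_mem_range L hneg ⟨0, map_zero L⟩, Nat.card_eq_fintype_card,
    Fintype.card_subtype]
  rfl

theorem wt_linearMap_add_of_notMem_range (L : W →ₗ[R] V) {c : V}
    (hc : c ∉ LinearMap.range L) :
    wt (fun x => L x + c) = Fintype.card W := by
  classical
  have hneg : ∀ x, L x + c ≠ 0 := fun x hx =>
    hc ⟨-x, by rw [map_neg, neg_eq_iff_eq_neg, ← add_eq_zero_iff_eq_neg, hx]⟩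
  simp [wt_eq_card_sub_card_filter, hneg]

end WeightOfAffineMap
section LiftedReedMuller

variable {E : Type*} [Field E] [Algebra (ZMod 2) E] {m : ℕ}

noncomputable def affineWord : ((Fin m → E) × E) →ₗ[E] ((Fin m → ZMod 2) → E) where
  toFun p x := Fintype.linearCombination (ZMod 2) p.1 x + p.2
  map_add' p q := by
    ext x; simp [Fintype.linearCombination_apply, sum_add_distrib]; abel
  map_smul' a p := by
    ext x; simp [Fintype.linearCombination_apply, mul_add, Finset.mul_sum]

theorem affineWord_apply (p : (Fin m → E) × E) (x : Fin m → ZMod 2) :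
    affineWord p x = ∑ i, x i • p.1 i + p.2 := rfl

theorem affineWord_eq_linearCombination_add (p : (Fin m → E) × E) :
    affineWord p = fun x => Fintype.linearCombination (ZMod 2) p.1 x + p.2 := rfl

theorem affineWord_injective : Function.Injective (affineWord (E := E) (m := m)) := by
  refine (injective_iff_map_eq_zero _).mpr fun ⟨v, c⟩ hp => ?_
  have hc : c = 0 := by simpa [affineWord_apply] using congrFun hp 0
  subst hc
  have hv : v = 0 := funext fun i => by
    simpa [affineWord_apply, Pi.single_apply] using congrFun hp (Pi.single i 1)
  simp [hv]

theorem evalLM_apply (f : MvPolynomial (Fin m) (ZMod 2)) (x : Fin m → ZMod 2) :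
    evalLM m f x = MvPolynomial.eval x f := rfl

theorem algebraMap_eval_mem_liftCode_RM {r : ℕ} {f : MvPolynomial (Fin m) (ZMod 2)}
    (hf : f.totalDegree ≤ r) :
    (fun x => algebraMap (ZMod 2) E (MvPolynomial.eval x f)) ∈ liftCode (ZMod 2) E (RM r m) :=
  subset_span
    ⟨evalLM m f, ⟨f, (MvPolynomial.mem_restrictTotalDegree _ _ _).mpr hf, rfl⟩, rfl⟩

theorem affineWord_single_zero (i : Fin m) :
    affineWord (Pi.single i 1, 0) = fun x : Fin m → ZMod 2 => algebraMap (ZMod 2) E (x i) := by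
  ext x; simp [affineWord_apply, Pi.single_apply, Algebra.algebraMap_eq_smul_one]

theorem affineWord_zero_one :
    affineWord (0, 1) = fun _ : Fin m → ZMod 2 => (1 : E) := by
  ext x; simp [affineWord_apply]

theorem range_affineWord : LinearMap.range affineWord = liftCode (ZMod 2) E (RM 1 m) := by
  apply le_antisymm
  · rintro _ ⟨⟨v, c⟩, rfl⟩
    have hvc :
        (v, c) = ∑ i, v i • ((Pi.single i 1, 0) : (Fin m → E) × E) + c • (0, 1) := by
      ext <;> simp [Prod.fst_sum, Prod.snd_sum, Finset.sum_apply, Pi.single_apply]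
    rw [hvc]
    simp only [map_add, map_sum, map_smul, affineWord_zero_one]
    refine add_mem (sum_mem fun i _ => smul_mem _ _ ?_) (smul_mem _ _ ?_)
    · simpa [affineWord_single_zero] using
        algebraMap_eval_mem_liftCode_RM (E := E) (MvPolynomial.totalDegree_X i).le
    · simpa using algebraMap_eval_mem_liftCode_RM (E := E) (m := m) (f := 1) (by simp)
  · rw [liftCode, span_le]
    rintro _ ⟨c, hc, rfl⟩
    suffices RM 1 m ≤ ((LinearMap.range affineWord).restrictScalars (ZMod 2)).comap
        ((Algebra.linearMap (ZMod 2) E).compLeft _) from this hc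
    rw [RM, map_le_iff_le_comap, MvPolynomial.restrictTotalDegree,
      MvPolynomial.restrictSupport_eq_span, span_le]
    rintro _ ⟨s, hs, rfl⟩
    rcases Nat.le_one_iff_eq_zero_or_eq_one.mp hs with hs | hs
    · obtain rfl : s = 0 := (Finsupp.degree_eq_zero_iff s).mp hs
      exact ⟨(0, 1), by ext x; simp [affineWord_apply, evalLM_apply]⟩
    · obtain ⟨i, rfl⟩ := (Finsupp.sum_eq_one_iff s).mp hs
      exact ⟨(Pi.single i 1, 0), by
        ext x; simp [affineWord_single_zero, evalLM_apply, MvPolynomial.eval_monomial]⟩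

theorem wt_affineWord_of_mem {p : (Fin m → E) × E} (hp : p.2 ∈ span (ZMod 2) (Set.range p.1)) :
    wt (affineWord p) = 2 ^ m - 2 ^ (m - (Set.range p.1).finrank (ZMod 2)) := by
  rw [← Fintype.range_linearCombination] at hp
  have hrank := LinearMap.finrank_range_add_finrank_ker (Fintype.linearCombination (ZMod 2) p.1)
  rw [finrank_fin_fun] at hrank
  rw [Set.finrank, ← Fintype.range_linearCombination, affineWord_eq_linearCombination_add,
    wt_linearMap_add_of_mem_range _ hp, natCard_eq_pow_finrank (K := ZMod 2), Nat.card_zmod]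
  simp [Fintype.card_pi]
  congr 2; omega

theorem wt_affineWord_of_notMem {p : (Fin m → E) × E}
    (hp : p.2 ∉ span (ZMod 2) (Set.range p.1)) : wt (affineWord p) = 2 ^ m := by
  rw [← Fintype.range_linearCombination] at hp
  rw [affineWord_eq_linearCombination_add, wt_linearMap_add_of_notMem_range _ hp]
  simp [Fintype.card_pi]

theorem wt_affineWord_eq_iff {p : (Fin m → E) × E} {h : ℕ} (hh : h ≤ m) :
    wt (affineWord p) = 2 ^ m - 2 ^ (m - h) ↔
      (Set.range p.1).finrank (ZMod 2) = h ∧ p.2 ∈ span (ZMod 2) (Set.range p.1) := by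
  by_cases hp : p.2 ∈ span (ZMod 2) (Set.range p.1)
  · have hr : (Set.range p.1).finrank (ZMod 2) ≤ m :=
      (finrank_range_le_card p.1).trans_eq (Fintype.card_fin m)
    rw [wt_affineWord_of_mem hp, (two_pow_sub_two_pow_sub_injOn m).eq_iff hr hh]
    simp [hp]
  · rw [wt_affineWord_of_notMem hp]
    simp [hp, (two_pow_sub_two_pow_sub_lt m h).ne']

theorem wt_affineWord_mem (p : (Fin m → E) × E) [FiniteDimensional (ZMod 2) E] :
    wt (affineWord p) ∈
      insert (2 ^ m) ((Icc 0 (finrank (ZMod 2) E)).image fun h => 2 ^ m - 2 ^ (m - h)) := by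
  by_cases hp : p.2 ∈ span (ZMod 2) (Set.range p.1)
  · rw [wt_affineWord_of_mem hp]
    exact mem_insert_of_mem (mem_image_of_mem _ (mem_Icc.mpr ⟨Nat.zero_le _, finrank_le _⟩))
  · rw [wt_affineWord_of_notMem hp]
    exact mem_insert_self _ _

variable [Fintype E]

theorem numWt_liftCode_RM_one (i : ℕ) :
    numWt (liftCode (ZMod 2) E (RM 1 m)) i = #{p : (Fin m → E) × E | wt (affineWord p) = i} := by
  classical
  have hset : {c | c ∈ liftCode (ZMod 2) E (RM 1 m) ∧ wt c = i} =
      affineWord '' {p | wt (affineWord p) = i} := by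
    ext c
    simp only [← range_affineWord, LinearMap.mem_range, Set.mem_ofPred_eq, Set.mem_image]
    constructor
    · rintro ⟨⟨p, rfl⟩, hw⟩; exact ⟨p, hw, rfl⟩
    · rintro ⟨p, hw, rfl⟩; exact ⟨⟨p, rfl⟩, hw⟩
  rw [numWt, hset, Set.ncard_image_of_injective _ affineWord_injective, Set.ncard_eq_toFinset_card',
    Set.toFinset_ofPred]

theorem numWt_liftCode_RM_one_two_pow_sub {h : ℕ} (hh : h ≤ m) :
    numWt (liftCode (ZMod 2) E (RM 1 m)) (2 ^ m - 2 ^ (m - h)) =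
      2 ^ h * numFamiliesOfRank (ZMod 2) E m h := by
  classical
  have hfiber : ∀ v : Fin m → E,
      #{c | (Set.range v).finrank (ZMod 2) = h ∧ c ∈ span (ZMod 2) (Set.range v)} =
        if (Set.range v).finrank (ZMod 2) = h then 2 ^ h else 0 := fun v => by
    split_ifs with hv
    · simp only [hv, true_and]
      rw [← Fintype.card_subtype, card_eq_pow_finrank (K := ZMod 2), ZMod.card, ← hv]
      rfl
    · simp [hv]
  simp_rw [numWt_liftCode_RM_one, wt_affineWord_eq_iff hh, card_filter, Fintype.sum_prod_type,
    ← card_filter, hfiber, sum_ite, sum_const_zero, add_zero, sum_const, smul_eq_mul]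
  exact mul_comm _ _

theorem numWt_liftCode_RM_one_eq_zero {i : ℕ}
    (hi : i ∉ insert (2 ^ m) ((Icc 0 (finrank (ZMod 2) E)).image fun h => 2 ^ m - 2 ^ (m - h))) :
    numWt (liftCode (ZMod 2) E (RM 1 m)) i = 0 := by
  rw [numWt_liftCode_RM_one, card_eq_zero, filter_eq_empty_iff]
  rintro p - rfl
  exact hi (wt_affineWord_mem p)

theorem numWt_liftCode_RM_one_two_pow_add_sum (hℓ : finrank (ZMod 2) E ≤ m) :
    numWt (liftCode (ZMod 2) E (RM 1 m)) (2 ^ m) +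
        ∑ h ∈ Icc 0 (finrank (ZMod 2) E),
          numWt (liftCode (ZMod 2) E (RM 1 m)) (2 ^ m - 2 ^ (m - h)) =
      Fintype.card E ^ (m + 1) := by
  have hinj : Set.InjOn (fun h => 2 ^ m - 2 ^ (m - h)) (Icc 0 (finrank (ZMod 2) E)) :=
    (two_pow_sub_two_pow_sub_injOn m).mono fun h hh => (mem_Icc.mp hh).2.trans hℓ
  have hnot : 2 ^ m ∉ (Icc 0 (finrank (ZMod 2) E)).image fun h => 2 ^ m - 2 ^ (m - h) := by
    simpa using fun h _ => (two_pow_sub_two_pow_sub_lt m h).ne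
  have hcard :=
    card_eq_sum_card_fiberwise (s := univ) fun p _ => wt_affineWord_mem (E := E) (m := m) p
  rw [sum_insert hnot, sum_image hinj, card_univ, Fintype.card_prod, Fintype.card_fun,
    Fintype.card_fin, ← pow_succ] at hcard
  simp only [numWt_liftCode_RM_one]
  exact hcard.symm

end LiftedReedMuller

theorem stmt17_general {E : Type*} [Field E] [Algebra (ZMod 2) E] [Fintype E]
    {m ℓ : ℕ} (hlm : ℓ ≤ m)
    (hE : Fintype.card E = 2 ^ ℓ) :
    numWt (liftCode (ZMod 2) E (RM 1 m)) 0 = 1 ∧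
    (∀ h, 1 ≤ h → h ≤ ℓ →
      (numWt (liftCode (ZMod 2) E (RM 1 m)) (2 ^ m - 2 ^ (m - h)) : ℚ)
        = 2 ^ h * ∏ j ∈ Finset.Icc 1 h,
            (((2 : ℚ) ^ ℓ - 2 ^ (j - 1)) * ((2 : ℚ) ^ m - 2 ^ (j - 1))) /
            ((2 : ℚ) ^ (j - 1) * ((2 : ℚ) ^ j - 1))) ∧
    numWt (liftCode (ZMod 2) E (RM 1 m)) (2 ^ m)
      = 2 ^ (ℓ * (m + 1)) - 1 -
          ∑ h ∈ Finset.Icc 1 ℓ, numWt (liftCode (ZMod 2) E (RM 1 m)) (2 ^ m - 2 ^ (m - h)) ∧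
    ∀ i, i ≠ 0 → i ≠ 2 ^ m → (∀ h, 1 ≤ h → h ≤ ℓ → i ≠ 2 ^ m - 2 ^ (m - h)) →
      numWt (liftCode (ZMod 2) E (RM 1 m)) i = 0 := by
  obtain rfl : finrank (ZMod 2) E = ℓ := Nat.pow_right_injective le_rfl <|
    show 2 ^ _ = 2 ^ ℓ by rw [← hE, card_eq_pow_finrank (K := ZMod 2), ZMod.card]
  have hA₀ : numWt (liftCode (ZMod 2) E (RM 1 m)) 0 = 1 := by
    simpa [numFamiliesOfRank_zero_right] using
      numWt_liftCode_RM_one_two_pow_sub (E := E) (Nat.zero_le m)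
  refine ⟨hA₀, fun h _ hh => ?_, ?_, fun i hi₀ hi hih => numWt_liftCode_RM_one_eq_zero ?_⟩
  · rw [numWt_liftCode_RM_one_two_pow_sub (hh.trans hlm), Nat.cast_mul, numFamiliesOfRank_eq_prod,
      ← Ico_add_one_right_eq_Icc, prod_Ico_eq_prod_range]
    simp [add_comm 1]
  · have hsum := numWt_liftCode_RM_one_two_pow_add_sum (E := E) hlm
    rw [← insert_Icc_add_one_left_eq_Icc (Nat.zero_le _), sum_insert (by simp), hE, ← pow_mul]
      at hsum
    simp only [zero_add, Nat.sub_zero, Nat.sub_self, hA₀] at hsum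
    omega
  · simp only [mem_insert, mem_image, mem_Icc, not_or, not_exists, not_and]
    refine ⟨hi, fun h ⟨_, hh⟩ hih' => ?_⟩
    rcases Nat.eq_zero_or_pos h with rfl | hpos
    · simp [← hih'] at hi₀
    · exact hih h hpos hh hih'.symm

/-- the weight distribution of the lifted first-order Reed-Muller code
`RM₂(1,m)(2|2^ℓ)`: `A₀ = 1`;
`A_{2^m-2^{m-h}} = 2^h ∏_{j=1}^h (2^ℓ-2^{j-1})(2^m-2^{j-1})/(2^{j-1}(2^j-1))` for `1 ≤ h ≤ ℓ`;
`A_{2^m} = 2^{ℓ(m+1)} - 1 - ∑_{h=1}^ℓ A_{2^m-2^{m-h}}`; and `A_i = 0` otherwise. -/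
theorem stmt17 {E : Type*} [Field E] [Algebra (ZMod 2) E] [Fintype E]
    {m ℓ : ℕ} (hm : 3 ≤ m) (hl1 : 1 ≤ ℓ) (hlm : ℓ ≤ m)
    (hE : Fintype.card E = 2 ^ ℓ) :
    numWt (liftCode (ZMod 2) E (RM 1 m)) 0 = 1 ∧
    (∀ h, 1 ≤ h → h ≤ ℓ →
      (numWt (liftCode (ZMod 2) E (RM 1 m)) (2 ^ m - 2 ^ (m - h)) : ℚ)
        = 2 ^ h * ∏ j ∈ Finset.Icc 1 h,
            (((2 : ℚ) ^ ℓ - 2 ^ (j - 1)) * ((2 : ℚ) ^ m - 2 ^ (j - 1))) /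
            ((2 : ℚ) ^ (j - 1) * ((2 : ℚ) ^ j - 1))) ∧
    numWt (liftCode (ZMod 2) E (RM 1 m)) (2 ^ m)
      = 2 ^ (ℓ * (m + 1)) - 1 -
          ∑ h ∈ Finset.Icc 1 ℓ, numWt (liftCode (ZMod 2) E (RM 1 m)) (2 ^ m - 2 ^ (m - h)) ∧
    ∀ i, i ≠ 0 → i ≠ 2 ^ m → (∀ h, 1 ≤ h → h ≤ ℓ → i ≠ 2 ^ m - 2 ^ (m - h)) →
      numWt (liftCode (ZMod 2) E (RM 1 m)) i = 0 :=
  stmt17_general hlm hE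
end

section
/- For m ≥ 3, the lifted code RM₂(1,m)(2|2²) has weight enumerator 1 + 3(2^{m+1}−2) z^{2^{m−1}} + 4(2^m−1)(2^m−2) z^{3·2^{m−2}} + 3(2^{m+1}−1) z^{2^m}. -/
open Finset

/-!
A codeword of the lifted code is `x ↦ L x + b` with `L : 𝔽₂ᵐ → E` an `𝔽₂`-linear map and
`b ∈ E`. Its zero set is a coset of `ker L` when `b ∈ range L` and empty otherwise, so its weight
is `2ᵐ - 2^(m - r)` for the `2^r` values of `b` in `range L` and `2ᵐ` for the others, where
`r = dim (range L) ∈ {0, 1, 2}`. There is one map of rank `0`; the surjective maps correspond,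
by duality, to linearly independent pairs of linear forms on `𝔽₂ᵐ`, so there are
`(2ᵐ - 1)(2ᵐ - 2)` of them; the remaining `3(2ᵐ - 1)` maps have rank `1`.
-/

open Module Function

section LinearAlgebra
variable {K V W : Type*} [Field K] [AddCommGroup V] [Module K V] [AddCommGroup W] [Module K W]

theorem LinearMap.surjective_iff_linearIndependent_dualMap {ι : Type*} [DecidableEq ι] [Finite ι]
    (b : Basis ι K W) (f : V →ₗ[K] W) :
    Surjective f ↔ LinearIndependent K (f.dualMap ∘ b.dualBasis) := by
  rw [← LinearMap.dualMap_injective_iff]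
  exact ⟨fun hf => b.dualBasis.linearIndependent.map' _ (LinearMap.ker_eq_bot.mpr hf),
    fun hli => LinearMap.injective_of_linearIndependent b.dualBasis.span_eq hli⟩

theorem LinearMap.dualMap_comp_dualBasis_injective {ι : Type*} [DecidableEq ι] [Finite ι]
    (b : Basis ι K W) : Injective fun f : V →ₗ[K] W => f.dualMap ∘ b.dualBasis := by
  intro f g hfg
  ext x
  refine b.ext_elem fun i => ?_
  simpa [Basis.dualBasis_apply] using LinearMap.congr_fun (congr_fun hfg i) x

theorem LinearMap.card_finrank_range_eq_zero [FiniteDimensional K V] :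
    Nat.card {f : V →ₗ[K] W // finrank K (LinearMap.range f) = 0} = 1 := by
  simp only [Submodule.finrank_eq_zero, LinearMap.range_eq_bot]
  exact Nat.card_unique

theorem LinearMap.card_finrank_range_eq_finrank [FiniteDimensional K W] :
    Nat.card {f : V →ₗ[K] W // finrank K (LinearMap.range f) = finrank K W} =
      Nat.card {f : V →ₗ[K] W // Surjective f} := by
  have key (f : V →ₗ[K] W) : finrank K (LinearMap.range f) = finrank K W ↔ Surjective f := by
    rw [← LinearMap.range_eq_top]
    exact ⟨Submodule.eq_top_of_finrank_eq, fun h => h ▸ finrank_top K W⟩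
  simp only [key]

instance LinearMap.finite_of_finite [Finite V] [Finite W] : Finite (V →ₗ[K] W) :=
  Finite.of_injective _ DFunLike.coe_injective

theorem LinearMap.sum_card_finrank_range_eq [Finite V] [Finite W] :
    ∑ j ∈ Finset.range (finrank K W + 1),
        Nat.card {f : V →ₗ[K] W // finrank K (LinearMap.range f) = j} = Nat.card (V →ₗ[K] W) := by
  classical
  have := Fintype.ofFinite (V →ₗ[K] W)
  simp only [Nat.card_eq_fintype_card, Fintype.card_subtype]
  exact (Finset.card_eq_sum_card_fiberwise fun f _ =>
    Finset.mem_range.mpr (Nat.lt_succ_of_le (Submodule.finrank_le _))).symm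

variable [Fintype K]

theorem Module.natCard_eq_card_pow_finrank [Finite V] :
    Nat.card V = Fintype.card K ^ finrank K V := by
  have := Fintype.ofFinite V
  rw [Nat.card_eq_fintype_card, Module.card_eq_pow_finrank (K := K)]

-- Surjective maps `V → W` correspond to injective maps `W* → V*`, i.e. to linearly independent
-- families in `V*` indexed by a basis of `W*`.
theorem LinearMap.card_surjective [Finite V] [Finite W] (h : finrank K W ≤ finrank K V) :
    Nat.card {f : V →ₗ[K] W // Surjective f} =
      ∏ i : Fin (finrank K W), (Fintype.card K ^ finrank K V - Fintype.card K ^ i.val) := by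
  let b := Module.finBasisOfFinrankEq K W rfl
  let e : (V →ₗ[K] W) → Fin (finrank K W) → Dual K V := fun f => f.dualMap ∘ b.dualBasis
  have he : Bijective e := by
    refine (Nat.bijective_iff_injective_and_card e).mpr
      ⟨LinearMap.dualMap_comp_dualBasis_injective b, ?_⟩
    rw [Nat.card_fun, Module.natCard_eq_card_pow_finrank (K := K),
      Module.natCard_eq_card_pow_finrank (K := K), Module.finrank_linearMap,
      Subspace.dual_finrank_eq, Nat.card_eq_fintype_card, Fintype.card_fin, pow_mul]
  rw [← Subspace.dual_finrank_eq (K := K) (V := V),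
    ← card_linearIndependent (by rwa [Subspace.dual_finrank_eq])]
  exact Nat.card_congr ((Equiv.ofBijective e he).subtypeEquiv fun f =>
    LinearMap.surjective_iff_linearIndependent_dualMap b f)

theorem LinearMap.card_finrank_range_eq_two [Finite V] [Finite W]
    (hW : finrank K W = 2) (hV : 2 ≤ finrank K V) :
    Nat.card {f : V →ₗ[K] W // finrank K (LinearMap.range f) = 2} =
      (Fintype.card K ^ finrank K V - 1) * (Fintype.card K ^ finrank K V - Fintype.card K) := by
  rw [← hW, LinearMap.card_finrank_range_eq_finrank, LinearMap.card_surjective (hW ▸ hV), hW,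
    Fin.prod_univ_two]
  simp

theorem LinearMap.card_finrank_range_eq_one [Finite V] [Finite W]
    (hW : finrank K W = 2) (hV : 2 ≤ finrank K V) :
    Nat.card {f : V →ₗ[K] W // finrank K (LinearMap.range f) = 1} =
      (Fintype.card K + 1) * (Fintype.card K ^ finrank K V - 1) := by
  have hsum := LinearMap.sum_card_finrank_range_eq (K := K) (V := V) (W := W)
  rw [hW, Finset.sum_range_succ, Finset.sum_range_succ, Finset.sum_range_one,
    LinearMap.card_finrank_range_eq_zero, LinearMap.card_finrank_range_eq_two hW hV,
    Module.natCard_eq_card_pow_finrank (K := K) (V := V →ₗ[K] W), Module.finrank_linearMap,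
    hW] at hsum
  have hq : 2 ≤ Fintype.card K := Fintype.one_lt_card
  have hqn : Fintype.card K ≤ Fintype.card K ^ finrank K V :=
    Nat.le_self_pow (by omega) _
  zify [hqn, (by omega : 1 ≤ Fintype.card K ^ finrank K V)] at hsum ⊢
  push_cast [pow_mul] at hsum
  linear_combination hsum

end LinearAlgebra

theorem Set.ncard_setOf_prod {α β : Type*} [Fintype α] [Finite β] (P : α × β → Prop) :
    {p | P p}.ncard = ∑ a, {b | P (a, b)}.ncard := by
  classical
  have := Fintype.ofFinite β
  simp only [Set.ncard_eq_toFinset_card', Set.toFinset_ofPred, Finset.card_filter,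
    Fintype.sum_prod_type]

theorem Set.ncard_setOf_ite_eq {α : Type*} [Finite α] (s : Set α) [DecidablePred (· ∈ s)]
    (x y i : ℕ) :
    {a | (if a ∈ s then x else y) = i}.ncard =
      (if x = i then s.ncard else 0) + (if y = i then Nat.card α - s.ncard else 0) := by
  have h : {a | (if a ∈ s then x else y) = i} = {a | a ∈ s ∧ x = i} ∪ {a | a ∉ s ∧ y = i} := by
    ext a; by_cases a ∈ s <;> simp [*]
  rw [h, Set.ncard_union_eq (Set.disjoint_left.mpr fun a ha hb => hb.1 ha.1), ← Set.ncard_compl]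
  congr 1 <;> split_ifs <;> simp [*, ← Set.compl_ofPred]

open Classical in
theorem AddMonoidHom.ncard_fiber {G H : Type*} [AddGroup G] [AddGroup H] (f : G →+ H) (y : H) :
    {x | f x = y}.ncard = if y ∈ f.range then Nat.card f.ker else 0 := by
  split_ifs with hy
  · obtain ⟨x₀, rfl⟩ := hy
    have : {x | f x = f x₀} = (x₀ + ·) '' (f.ker : Set G) := by
      ext x
      simp only [Set.mem_ofPred_eq, Set.mem_image, SetLike.mem_coe, AddMonoidHom.mem_ker]
      refine ⟨fun hx => ⟨-x₀ + x, by simp [hx], by simp⟩, ?_⟩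
      rintro ⟨k, hk, rfl⟩
      simp [hk]
    rw [this, Set.ncard_image_of_injective _ (add_right_injective x₀), ← Nat.card_coe_set_eq]
    rfl
  · convert Set.ncard_empty G
    exact Set.eq_empty_of_forall_notMem fun x hx => hy ⟨x, hx⟩

section Weight

open Classical in
theorem wt_add_const {G H : Type*} [AddGroup G] [Fintype G] [AddGroup H] (f : G →+ H) (b : H) :
    wt (fun x => f x + b) = if b ∈ f.range then Nat.card G - Nat.card f.ker else Nat.card G := by
  have hzero : {x | f x + b = 0} = {x | f x = -b} := by
    ext x; exact add_eq_zero_iff_eq_neg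
  have hcompl : {x | f x + b ≠ 0} = {x | f x + b = 0}ᶜ := rfl
  rw [wt, hcompl, Set.ncard_compl, hzero, f.ncard_fiber, neg_mem_iff]
  split_ifs <;> simp

variable {K V W : Type*} [Field K] [Fintype K] [AddCommGroup V] [Module K V] [Fintype V]
  [AddCommGroup W] [Module K W]

open Classical in
theorem wt_linearMap_add_const (L : V →ₗ[K] W) (b : W) :
    wt (fun x => L x + b) =
      if b ∈ LinearMap.range L then
        Fintype.card K ^ finrank K V -
          Fintype.card K ^ (finrank K V - finrank K (LinearMap.range L))
      else Fintype.card K ^ finrank K V := by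
  have hmem : b ∈ L.toAddMonoidHom.range ↔ b ∈ LinearMap.range L := Iff.rfl
  have hker : Nat.card L.toAddMonoidHom.ker =
      Fintype.card K ^ (finrank K V - finrank K (LinearMap.range L)) := by
    rw [← L.finrank_range_add_finrank_ker, Nat.add_sub_cancel_left,
      ← Module.natCard_eq_card_pow_finrank]
    rfl
  rw [show (fun x => L x + b) = fun x => L.toAddMonoidHom x + b from rfl, wt_add_const,
    Nat.card_eq_fintype_card, Module.card_eq_pow_finrank (K := K), hker]
  simp only [hmem]

theorem ncard_setOf_wt_linearMap_add_const [Finite W] (L : V →ₗ[K] W) (i : ℕ) :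
    {b : W | wt (fun x => L x + b) = i}.ncard =
      (if Fintype.card K ^ finrank K V -
          Fintype.card K ^ (finrank K V - finrank K (LinearMap.range L)) = i
        then Fintype.card K ^ finrank K (LinearMap.range L) else 0) +
      (if Fintype.card K ^ finrank K V = i
        then Nat.card W - Fintype.card K ^ finrank K (LinearMap.range L) else 0) := by
  classical
  have hrange : (LinearMap.range L : Set W).ncard =
      Fintype.card K ^ finrank K (LinearMap.range L) := by
    rw [← Nat.card_coe_set_eq]
    exact Module.natCard_eq_card_pow_finrank
  simp_rw [wt_linearMap_add_const]
  rw [← hrange]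
  convert Set.ncard_setOf_ite_eq (LinearMap.range L : Set W) _ _ i using 4
  exact Iff.rfl

end Weight

section ReedMuller

theorem liftCode_span_s18 (F : Type*) {ι : Type*} (E : Type*) [Field F] [Field E] [Algebra F E]
    (S : Set (ι → F)) :
    liftCode F E (Submodule.span F S) =
      Submodule.span E ((fun c : ι → F => fun j => algebraMap F E (c j)) '' S) := by
  let φ : (ι → F) →ₗ[F] (ι → E) := LinearMap.compLeft (Algebra.linearMap F E) ι
  change Submodule.span E (φ '' _) = Submodule.span E (φ '' S)
  refine le_antisymm (Submodule.span_le.mpr ?_)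
    (Submodule.span_mono (Set.image_mono Submodule.subset_span))
  rw [← Submodule.map_coe, Submodule.map_span]
  exact Submodule.span_le_restrictScalars F E _

theorem RM_one_eq_span (m : ℕ) :
    RM 1 m =
      Submodule.span (ZMod 2) (insert 1 (Set.range fun i (x : Fin m → ZMod 2) => x i)) := by
  have hdeg : {n : Fin m →₀ ℕ | (n.sum fun _ e => e) ≤ 1} =
      insert 0 (Set.range fun i => Finsupp.single i 1) := by
    rw [Finsupp.range_single_one]
    ext n
    change n.degree ≤ 1 ↔ _
    simp [Nat.le_one_iff_eq_zero_or_eq_one, Finsupp.degree_eq_zero_iff]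
  rw [RM, MvPolynomial.restrictTotalDegree, MvPolynomial.restrictSupport_eq_span, hdeg,
    Submodule.map_span, Set.image_image, Set.image_insert_eq, ← Set.range_comp]
  refine congrArg _ (congrArg₂ insert ?_ (congrArg Set.range ?_)) <;> ext <;>
    simp [evalLM, MvPolynomial.eval_monomial, Finsupp.single_apply]

variable {E : Type*} [Field E] [Algebra (ZMod 2) E] {m : ℕ}

theorem mem_liftCode_RM_one_iff (c : (Fin m → ZMod 2) → E) :
    c ∈ liftCode (ZMod 2) E (RM 1 m) ↔
      ∃ (L : (Fin m → ZMod 2) →ₗ[ZMod 2] E) (b : E), c = fun x => L x + b := by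
  let e := LinearEquiv.piRing (ZMod 2) E (Fin m) (ZMod 2)
  have hL (a : Fin m → E) (x : Fin m → ZMod 2) :
      e.symm a x = ∑ i, a i * algebraMap (ZMod 2) E (x i) := by
    simp [e, LinearEquiv.piRing_symm_apply, Algebra.smul_def, mul_comm]
  rw [RM_one_eq_span, liftCode_span_s18, Set.image_insert_eq, ← Set.range_comp,
    Submodule.mem_span_insert]
  simp only [Submodule.mem_span_range_iff_exists_fun]
  constructor
  · rintro ⟨b, _, ⟨a, rfl⟩, rfl⟩
    refine ⟨e.symm a, b, funext fun x => ?_⟩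
    simp [hL, add_comm, Finset.sum_apply]
  · rintro ⟨L, b, rfl⟩
    refine ⟨b, _, ⟨e L, rfl⟩, funext fun x => ?_⟩
    simp [← hL, add_comm, Finset.sum_apply]

theorem numWt_liftCode_RM_one_s18 [Fintype E] (i : ℕ) :
    numWt (liftCode (ZMod 2) E (RM 1 m)) i =
      ∑ j ∈ range (finrank (ZMod 2) E + 1),
        Nat.card {L : (Fin m → ZMod 2) →ₗ[ZMod 2] E //
            finrank (ZMod 2) (LinearMap.range L) = j} *
          ((if 2 ^ m - 2 ^ (m - j) = i then 2 ^ j else 0) +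
            (if 2 ^ m = i then Fintype.card E - 2 ^ j else 0)) := by
  classical
  have := Fintype.ofFinite ((Fin m → ZMod 2) →ₗ[ZMod 2] E)
  let aff : ((Fin m → ZMod 2) →ₗ[ZMod 2] E) × E → (Fin m → ZMod 2) → E :=
    fun p x => p.1 x + p.2
  have haff : Injective aff := by
    rintro ⟨L, b⟩ ⟨L', b'⟩ h
    obtain rfl : b = b' := by simpa [aff] using congr_fun h 0
    simp only [Prod.mk.injEq, and_true]
    exact LinearMap.ext fun x => by simpa [aff] using congr_fun h x
  have hcode : {c | c ∈ liftCode (ZMod 2) E (RM 1 m) ∧ wt c = i} =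
      aff '' {p | wt (aff p) = i} := by
    ext c
    simp only [mem_liftCode_RM_one_iff, Set.mem_ofPred_eq, Set.mem_image, Prod.exists]
    constructor
    · rintro ⟨⟨L, b, rfl⟩, hw⟩
      exact ⟨L, b, hw, rfl⟩
    · rintro ⟨L, b, hw, rfl⟩
      exact ⟨⟨L, b, rfl⟩, hw⟩
  rw [numWt, hcode, Set.ncard_image_of_injective _ haff, Set.ncard_setOf_prod]
  simp only [aff, ncard_setOf_wt_linearMap_add_const, ZMod.card, Module.finrank_fin_fun,
    Nat.card_eq_fintype_card]
  rw [← Finset.sum_fiberwise_of_maps_to (t := range (finrank (ZMod 2) E + 1))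
    (g := fun L => finrank (ZMod 2) (LinearMap.range L))
    (fun L _ => mem_range.mpr (Nat.lt_succ_of_le (Submodule.finrank_le _)))]
  refine Finset.sum_congr rfl fun j _ => ?_
  rw [Finset.sum_congr rfl fun L hL => by rw [(mem_filter.mp hL).2], sum_const, smul_eq_mul,
    Fintype.card_subtype]

end ReedMuller

/-- for `m ≥ 3` the lifted code `RM₂(1,m)(2|2²)` has weight enumerator
`1 + 3(2^{m+1}-2) z^{2^{m-1}} + 4(2^m-1)(2^m-2) z^{3·2^{m-2}} + 3(2^{m+1}-1) z^{2^m}`. -/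
theorem stmt18 {E : Type*} [Field E] [Algebra (ZMod 2) E] [Fintype E]
    {m : ℕ} (hm : 3 ≤ m) (hE : Fintype.card E = 2 ^ 2) :
    numWt (liftCode (ZMod 2) E (RM 1 m)) 0 = 1 ∧
    numWt (liftCode (ZMod 2) E (RM 1 m)) (2 ^ (m - 1)) = 3 * (2 ^ (m + 1) - 2) ∧
    numWt (liftCode (ZMod 2) E (RM 1 m)) (3 * 2 ^ (m - 2)) = 4 * (2 ^ m - 1) * (2 ^ m - 2) ∧
    numWt (liftCode (ZMod 2) E (RM 1 m)) (2 ^ m) = 3 * (2 ^ (m + 1) - 1) ∧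
    ∀ i, i ≠ 0 → i ≠ 2 ^ (m - 1) → i ≠ 3 * 2 ^ (m - 2) → i ≠ 2 ^ m →
      numWt (liftCode (ZMod 2) E (RM 1 m)) i = 0 := by
  have hE2 : finrank (ZMod 2) E = 2 := Nat.pow_right_injective le_rfl <|
    show 2 ^ finrank (ZMod 2) E = 2 ^ 2 by
      rw [← hE, Module.card_eq_pow_finrank (K := ZMod 2), ZMod.card]
  have hV : 2 ≤ finrank (ZMod 2) (Fin m → ZMod 2) := by rw [Module.finrank_fin_fun]; omega
  have hcount (i : ℕ) : numWt (liftCode (ZMod 2) E (RM 1 m)) i =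
      ((if 0 = i then 1 else 0) + (if 2 ^ m = i then 3 else 0)) +
      3 * (2 ^ m - 1) *
        ((if 2 ^ m - 2 ^ (m - 1) = i then 2 else 0) + (if 2 ^ m = i then 2 else 0)) +
      (2 ^ m - 1) * (2 ^ m - 2) * (if 2 ^ m - 2 ^ (m - 2) = i then 4 else 0) := by
    rw [numWt_liftCode_RM_one_s18, hE2, sum_range_succ, sum_range_succ, sum_range_one,
      LinearMap.card_finrank_range_eq_zero, LinearMap.card_finrank_range_eq_one hE2 hV,
      LinearMap.card_finrank_range_eq_two hE2 hV, hE]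
    simp
  obtain ⟨k, hk⟩ : ∃ k, m = k + 2 := ⟨m - 2, by omega⟩
  subst hk
  simp only [hcount, Nat.add_sub_cancel, show k + 2 - 1 = k + 1 by omega, pow_succ, mul_assoc 4]
  have : 1 ≤ 2 ^ k := Nat.one_le_two_pow
  refine ⟨?_, ?_, ?_, ?_, fun i h0 h1 h2 h3 => ?_⟩ <;> split_ifs <;> omega
end

section
/- For m ≥ 3, ℓ ≥ 1, 0 ≤ r < m, and each i ≥ 3 with A_i(RM₂(r,m)(2|2^ℓ)) > 0, the supports of the weight-i codewords of RM₂(r,m)(2|2^ℓ) form a 3-design on 2^m points. -/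
open Finset

/-!
Substituting affine polynomials for the variables does not raise the total degree, so the
affine group of `GF(2)^m` preserves `RM₂(r,m)`, hence the lifted code and the family of its
weight-`i` supports. Over `GF(2)` two distinct nonzero vectors are linearly independent, so the
affine group is 3-transitive: a linear map sending `b - a, c - a` to `b' - a', c' - a'`, followed
by a translation, sends `a, b, c` to `a', b', c'`. Hence the number of blocks through a 3-set does
not depend on the 3-set, and it is positive since a weight-`i` support with `i ≥ 3` contains three
points.
-/

open MvPolynomial

theorem MvPolynomial.totalDegree_bind₁_le {σ τ R : Type*} [CommSemiring R]
    {f : σ → MvPolynomial τ R} (hf : ∀ j, (f j).totalDegree ≤ 1) (p : MvPolynomial σ R) :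
    (bind₁ f p).totalDegree ≤ p.totalDegree := by
  conv_lhs => rw [p.as_sum, map_sum]
  refine (totalDegree_finsetSum _ _).trans (Finset.sup_le fun d hd => ?_)
  rw [bind₁_monomial]
  refine (totalDegree_mul _ _).trans ?_
  rw [totalDegree_C, zero_add]
  refine (totalDegree_finsetProd _ _).trans
    ((Finset.sum_le_sum fun j _ => ?_).trans (le_totalDegree hd))
  calc (f j ^ d j).totalDegree ≤ d j * (f j).totalDegree := totalDegree_pow _ _
    _ ≤ d j := mul_le_of_le_one_right' (hf j)

section AffineSubstitution

variable {K ι : Type*} [CommRing K] [Fintype ι] [DecidableEq ι]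

noncomputable def affineCoordPoly (φ : (ι → K) →ᵃ[K] (ι → K)) (j : ι) : MvPolynomial ι K :=
  ∑ k, monomial (Finsupp.single k 1) (φ.linear (Pi.single k 1) j) + C (φ 0 j)

theorem totalDegree_affineCoordPoly_le (φ : (ι → K) →ᵃ[K] (ι → K)) (j : ι) :
    (affineCoordPoly φ j).totalDegree ≤ 1 := by
  refine (totalDegree_add _ _).trans (max_le ?_ (by simp))
  refine (totalDegree_finsetSum _ _).trans (Finset.sup_le fun k _ => ?_)
  exact (totalDegree_monomial_le _ _).trans (by simp)

theorem eval_affineCoordPoly (φ : (ι → K) →ᵃ[K] (ι → K)) (x : ι → K) (j : ι) :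
    eval x (affineCoordPoly φ j) = φ x j := by
  have hsingle (k : ι) : (fun j => if k = j then (1 : K) else 0) = Pi.single k 1 := by
    ext; simp [Pi.single_apply, eq_comm]
  rw [φ.decomp, Pi.add_apply, LinearMap.pi_apply_eq_sum_univ φ.linear x]
  simp [affineCoordPoly, Finset.sum_apply, mul_comm, hsingle, eval_monomial]

theorem eval_bind₁_affineCoordPoly (φ : (ι → K) →ᵃ[K] (ι → K)) (x : ι → K)
    (p : MvPolynomial ι K) : eval x (bind₁ (affineCoordPoly φ) p) = eval (φ x) p := by
  simpa [eval_affineCoordPoly] using eval₂Hom_bind₁ (RingHom.id K) x (affineCoordPoly φ) p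

end AffineSubstitution

theorem comp_affineMap_mem_RM {r m : ℕ}
    (φ : (Fin m → ZMod 2) →ᵃ[ZMod 2] (Fin m → ZMod 2)) {c : (Fin m → ZMod 2) → ZMod 2}
    (hc : c ∈ RM r m) : c ∘ φ ∈ RM r m := by
  obtain ⟨p, hp, rfl⟩ := hc
  refine ⟨bind₁ (affineCoordPoly φ) p, ?_, ?_⟩
  · rw [SetLike.mem_coe, mem_restrictTotalDegree] at hp ⊢
    exact (totalDegree_bind₁_le (totalDegree_affineCoordPoly_le φ) p).trans hp
  · funext x
    exact eval_bind₁_affineCoordPoly φ x p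

theorem comp_mem_liftCode {F E ι : Type*} [Field F] [Field E] [Algebra F E]
    {C : Submodule F (ι → F)} (σ : ι → ι) (hσ : ∀ c ∈ C, c ∘ σ ∈ C)
    {c : ι → E} (hc : c ∈ liftCode F E C) : c ∘ σ ∈ liftCode F E C := by
  have h := Submodule.mem_map_of_mem (f := LinearMap.funLeft E E σ) hc
  rw [liftCode, Submodule.map_span] at h
  refine Submodule.span_mono ?_ h
  rintro _ ⟨_, ⟨d, hd, rfl⟩, rfl⟩
  exact ⟨d ∘ σ, hσ d hd, rfl⟩

section Supports

variable {ι R : Type*} [Fintype ι]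

theorem wt_comp_equiv [Zero R] (c : ι → R) (σ : ι ≃ ι) : wt (c ∘ σ) = wt c := by
  unfold wt
  rw [show {j | (c ∘ σ) j ≠ 0} = σ ⁻¹' {j | c j ≠ 0} from rfl, ← σ.image_symm_eq_preimage,
    Set.ncard_image_of_injective _ σ.symm.injective]

variable [Semiring R] {C : Submodule R (ι → R)} {i : ℕ} {σ : ι ≃ ι}

theorem preimage_mem_codeSupports (hσ : ∀ c ∈ C, c ∘ σ ∈ C) {s : Set ι}
    (hs : s ∈ codeSupports C i) : σ ⁻¹' s ∈ codeSupports C i := by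
  obtain ⟨c, hc, hwt, rfl⟩ := hs
  exact ⟨c ∘ σ, hσ c hc, (wt_comp_equiv c σ).trans hwt, rfl⟩

theorem ncard_codeSupports_superset_image (hσ : ∀ c ∈ C, c ∘ σ ∈ C)
    (hσ' : ∀ c ∈ C, c ∘ σ.symm ∈ C) (T : Set ι) :
    {s ∈ codeSupports C i | σ '' T ⊆ s}.ncard = {s ∈ codeSupports C i | T ⊆ s}.ncard := by
  refine Set.ncard_congr (fun s _ => σ ⁻¹' s) (fun s ⟨hs, hT⟩ => ?_) (fun s t _ _ hst => ?_)
    (fun t ⟨ht, hT⟩ => ⟨σ.symm ⁻¹' t, ⟨preimage_mem_codeSupports hσ' ht, ?_⟩, ?_⟩)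
  · exact ⟨preimage_mem_codeSupports hσ hs, Set.image_subset_iff.mp hT⟩
  · exact Set.preimage_injective.mpr σ.surjective hst
  · rwa [Set.image_subset_iff, ← Set.preimage_comp, σ.symm_comp_self, Set.preimage_id]
  · rw [← Set.preimage_comp, σ.symm_comp_self, Set.preimage_id]

end Supports

theorem LinearIndependent.exists_linearEquiv_apply_eq {K V ι : Type*} [DivisionRing K]
    [AddCommGroup V] [Module K V] [Finite ι] {u v : ι → V}
    (hu : LinearIndependent K u) (hv : LinearIndependent K v) :
    ∃ g : V ≃ₗ[K] V, ∀ i, g (u i) = v i := by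
  have : FiniteDimensional K (Submodule.span K (Set.range u)) :=
    FiniteDimensional.span_of_finite K (Set.finite_range u)
  obtain ⟨g, hg⟩ := Submodule.exists_linearEquiv_restrict_eq
    (hu.linearCombinationEquiv.symm ≪≫ₗ hv.linearCombinationEquiv)
  exact ⟨g, fun i => by simpa using (hg (hu.linearCombinationEquiv (Finsupp.single i 1))).symm⟩

section ZModTwo

variable {V : Type*} [AddCommGroup V] [Module (ZMod 2) V]

theorem linearIndependent_pair_of_ne {x y : V} (hx : x ≠ 0) (hy : y ≠ 0) (hxy : x ≠ y) :
    LinearIndependent (ZMod 2) ![x, y] := by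
  rw [LinearIndependent.pair_iff' hx]
  intro a
  obtain rfl | rfl : a = 0 ∨ a = 1 := by revert a; decide
  · simpa using hy.symm
  · simpa using hxy

theorem exists_affineEquiv_apply_eq_three {a b c a' b' c' : V}
    (hab : a ≠ b) (hac : a ≠ c) (hbc : b ≠ c)
    (hab' : a' ≠ b') (hac' : a' ≠ c') (hbc' : b' ≠ c') :
    ∃ φ : V ≃ᵃ[ZMod 2] V, φ a = a' ∧ φ b = b' ∧ φ c = c' := by
  have hli {a b c : V} (hab : a ≠ b) (hac : a ≠ c) (hbc : b ≠ c) :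
      LinearIndependent (ZMod 2) ![b - a, c - a] :=
    linearIndependent_pair_of_ne (sub_ne_zero.mpr hab.symm) (sub_ne_zero.mpr hac.symm)
      (by simpa using hbc)
  obtain ⟨g, hg⟩ := (hli hab hac hbc).exists_linearEquiv_apply_eq (hli hab' hac' hbc')
  have hb : g b = b' - a' + g a := by simpa [sub_eq_iff_eq_add] using hg 0
  have hc : g c = c' - a' + g a := by simpa [sub_eq_iff_eq_add] using hg 1
  refine ⟨g.toAffineEquiv.trans (AffineEquiv.constVAdd (ZMod 2) V (a' - g a)), ?_, ?_, ?_⟩ <;>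
    simp [hb, hc]

end ZModTwo

theorem stmt19_general {E : Type*} [Field E] [Algebra (ZMod 2) E] {m r : ℕ}
    (i : ℕ) (hi : 3 ≤ i) (hA : 0 < numWt (liftCode (ZMod 2) E (RM r m)) i) :
    ∃ lam : ℕ, 0 < lam ∧ ∀ T : Finset (Fin m → ZMod 2), T.card = 3 →
      Set.ncard {s ∈ codeSupports (liftCode (ZMod 2) E (RM r m)) i | ↑T ⊆ s} = lam := by
  set C := liftCode (ZMod 2) E (RM r m)
  have hinv (φ : (Fin m → ZMod 2) ≃ᵃ[ZMod 2] (Fin m → ZMod 2)) : ∀ c ∈ C, c ∘ φ ∈ C :=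
    fun _ => comp_mem_liftCode _ fun _ => comp_affineMap_mem_RM φ.toAffineMap
  obtain ⟨c₀, hc₀, hwt₀⟩ := Set.nonempty_of_ncard_ne_zero hA.ne'
  obtain ⟨a₀, b₀, d₀, ha₀, hb₀, hd₀, hab₀, had₀, hbd₀⟩ :=
    (Set.two_lt_ncard_iff (Set.toFinite _)).mp (show 2 < wt c₀ by omega)
  refine ⟨{s ∈ codeSupports C i | {a₀, b₀, d₀} ⊆ s}.ncard,
    (Set.ncard_pos (Set.toFinite _)).mpr ⟨_, ⟨c₀, hc₀, hwt₀, rfl⟩, ?_⟩, fun T hT => ?_⟩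
  · simp only [Set.insert_subset_iff, Set.singleton_subset_iff]
    exact ⟨ha₀, hb₀, hd₀⟩
  obtain ⟨a, b, c, hab, hac, hbc, rfl⟩ := Finset.card_eq_three.mp hT
  obtain ⟨φ, ha, hb, hc⟩ := exists_affineEquiv_apply_eq_three hab hac hbc hab₀ had₀ hbd₀
  rw [← ncard_codeSupports_superset_image (σ := φ.toEquiv) (hinv φ) (hinv φ.symm)]
  simp [Set.image_insert_eq, ha, hb, hc]

/-- for `m ≥ 3`, `ℓ ≥ 1`, `0 ≤ r < m`, and each `i ≥ 3` with
`A_i(RM₂(r,m)(2|2^ℓ)) > 0`, the supports of the weight-`i` codewords of the lifted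
Reed-Muller code form a 3-design on the `2^m` points. -/
theorem stmt19 {E : Type*} [Field E] [Algebra (ZMod 2) E] [Fintype E]
    {m r ℓ : ℕ} (hm : 3 ≤ m) (hl : 1 ≤ ℓ) (hr : r < m)
    (hE : Fintype.card E = 2 ^ ℓ)
    (i : ℕ) (hi : 3 ≤ i) (hA : 0 < numWt (liftCode (ZMod 2) E (RM r m)) i) :
    ∃ lam : ℕ, 0 < lam ∧ ∀ T : Finset (Fin m → ZMod 2), T.card = 3 →
      Set.ncard {s ∈ codeSupports (liftCode (ZMod 2) E (RM r m)) i | ↑T ⊆ s} = lam :=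
  stmt19_general i hi hA
end
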